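/- arXiv:2103.16811 — 7 statements merged into one kernel-verified Lean document; each statement's English description precedes it below -/
import Mathlib

section
/- (Rothschild–van Lint) Let n ≥ 1 and 0 ≤ k ≤ n, and let f = 1_S be the indicator function of a set S ⊆ F_2^n with |S| = 2^{n−k}. If for every α ∈ F_2^n the absolute value |f̂(α)| is either 0 or 1/2^k, then S is an affine subspace of F_2^n of dimension n−k. -/
open Finset

/-- The Fourier coefficient `f̂(α) = E_x[f(x)·(-1)^⟨α,x⟩]` of `f : F_2^n → ℝ`. -/
noncomputable def fc {n : ℕ} (f : (Fin n → ZMod 2) → ℝ) (α : Fin n → ZMod 2) : ℝ :=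
  (∑ x : Fin n → ZMod 2, f x * (-1 : ℝ) ^ (∑ i, α i * x i : ZMod 2).val) / 2 ^ n

/-!
Parseval gives `∑ f̂(α)² = |S| / 2ⁿ = 2⁻ᵏ`, so the Fourier support `T` of `f = 1_S` has exactly
`2ᵏ` elements. For `a ∈ S`, Fourier inversion writes `1 = f(a)` as a sum of `2ᵏ` terms
`f̂(α)(-1)^⟨α,a⟩` of absolute value `2⁻ᵏ`; hence all of them equal `2⁻ᵏ`, and inverting again gives
`f(x) = 2⁻ᵏ ∑_{α ∈ T} (-1)^⟨α,a+x⟩`, which is `1` exactly when `a + x ⊥ T`. So `S = a + T^⊥`, and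
`|S| = 2^(n-k)` gives the dimension.
-/

open Matrix

lemma ZMod.eq_zero_or_eq_one (a : ZMod 2) : a = 0 ∨ a = 1 := by decide +revert

noncomputable def signChar : AddChar (ZMod 2) ℝ where
  toFun a := (-1) ^ a.val
  map_zero_eq_one' := pow_zero _
  map_add_eq_mul' a b := by
    rcases a.eq_zero_or_eq_one with rfl | rfl <;> rcases b.eq_zero_or_eq_one with rfl | rfl <;>
      norm_num [show ZMod.val (2 : ZMod 2) = 0 from rfl, show ZMod.val (1 : ZMod 2) = 1 from rfl]

lemma signChar_one : signChar 1 = -1 := pow_one _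

lemma signChar_eq_one_iff {a : ZMod 2} : signChar a = 1 ↔ a = 0 := by
  rcases a.eq_zero_or_eq_one with rfl | rfl <;> norm_num [signChar_one]

lemma signChar_le_one (a : ZMod 2) : signChar a ≤ 1 := by
  rcases a.eq_zero_or_eq_one with rfl | rfl <;> norm_num [signChar_one]

lemma abs_signChar (a : ZMod 2) : |signChar a| = 1 := by
  rcases a.eq_zero_or_eq_one with rfl | rfl <;> norm_num [signChar_one]

lemma signChar_mul_self (a : ZMod 2) : signChar a * signChar a = 1 := by
  rw [← AddChar.map_add_eq_mul, CharTwo.add_self_eq_zero, AddChar.map_zero_eq_one]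

variable {n : ℕ}

lemma fc_eq (f : (Fin n → ZMod 2) → ℝ) (α : Fin n → ZMod 2) :
    fc f α = (∑ x, f x * signChar (α ⬝ᵥ x)) / 2 ^ n := rfl

noncomputable def dotSignChar (z : Fin n → ZMod 2) : AddChar (Fin n → ZMod 2) ℝ where
  toFun α := signChar (α ⬝ᵥ z)
  map_zero_eq_one' := by simp
  map_add_eq_mul' α β := by rw [add_dotProduct, AddChar.map_add_eq_mul]

lemma dotSignChar_eq_zero_iff {z : Fin n → ZMod 2} : dotSignChar z = 0 ↔ z = 0 := by
  refine ⟨fun h => funext fun i => ?_, by rintro rfl; ext; simp [dotSignChar]⟩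
  simpa [dotSignChar, signChar_eq_one_iff] using DFunLike.congr_fun h (Pi.single i 1)

lemma sum_signChar_dotProduct (z : Fin n → ZMod 2) :
    ∑ α, signChar (α ⬝ᵥ z) = if z = 0 then 2 ^ n else 0 := by
  classical
  have h := (dotSignChar z).sum_eq_ite
  simp only [dotSignChar_eq_zero_iff, Fintype.card_pi, Fintype.card_fin, ZMod.card, prod_const,
    card_univ] at h
  exact_mod_cast h

lemma signChar_dotProduct_mul (α x y : Fin n → ZMod 2) :
    signChar (α ⬝ᵥ y) * signChar (α ⬝ᵥ x) = signChar (α ⬝ᵥ (y - x)) := by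
  rw [dotProduct_sub, sub_eq_add_neg, ZMod.neg_eq_self_mod_two, AddChar.map_add_eq_mul]

theorem sum_fc_mul_signChar (f : (Fin n → ZMod 2) → ℝ) (x : Fin n → ZMod 2) :
    ∑ α, fc f α * signChar (α ⬝ᵥ x) = f x := by
  calc ∑ α, fc f α * signChar (α ⬝ᵥ x)
      = (∑ y, f y * ∑ α, signChar (α ⬝ᵥ (y - x))) / 2 ^ n := by
        simp only [fc_eq, div_mul_eq_mul_div, ← sum_div, sum_mul, mul_sum, mul_assoc,
          signChar_dotProduct_mul]
        rw [sum_comm]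
    _ = f x := by
        simp only [sum_signChar_dotProduct, sub_eq_zero, mul_ite, mul_zero, sum_ite_eq',
          mem_univ, if_true]
        field_simp

theorem sum_fc_sq (f : (Fin n → ZMod 2) → ℝ) :
    ∑ α, fc f α ^ 2 = (∑ x, f x ^ 2) / 2 ^ n := by
  calc ∑ α, fc f α ^ 2 = (∑ y, f y * ∑ α, fc f α * signChar (α ⬝ᵥ y)) / 2 ^ n := by
        simp only [sq, fc_eq f, mul_div_assoc', ← sum_div, mul_sum]
        rw [sum_comm]
        congr 1
        refine sum_congr rfl fun _ _ => sum_congr rfl fun _ _ => ?_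
        ring
    _ = (∑ x, f x ^ 2) / 2 ^ n := by simp only [sum_fc_mul_signChar, sq]

open Classical in
noncomputable def fourierSupport (f : (Fin n → ZMod 2) → ℝ) : Finset (Fin n → ZMod 2) :=
  univ.filter (fc f · ≠ 0)

lemma mem_fourierSupport {f : (Fin n → ZMod 2) → ℝ} {α : Fin n → ZMod 2} :
    α ∈ fourierSupport f ↔ fc f α ≠ 0 := by
  simp [fourierSupport]

lemma sum_fourierSupport_fc_mul (f : (Fin n → ZMod 2) → ℝ) (g : (Fin n → ZMod 2) → ℝ) :
    ∑ α ∈ fourierSupport f, fc f α * g α = ∑ α, fc f α * g α := by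
  classical
  exact sum_filter_of_ne fun _ _ h => left_ne_zero_of_mul h

lemma card_fourierSupport_mul_sq {f : (Fin n → ZMod 2) → ℝ} {c : ℝ}
    (hflat : ∀ α ∈ fourierSupport f, |fc f α| = c) :
    #(fourierSupport f) * c ^ 2 = ∑ α, fc f α ^ 2 := by
  simp only [sq, ← sum_fourierSupport_fc_mul]
  rw [sum_congr rfl fun α hα => by rw [← abs_mul_abs_self, hflat α hα], sum_const, nsmul_eq_mul]

section FlatSpectrum

variable {f : (Fin n → ZMod 2) → ℝ} {c : ℝ} {a : Fin n → ZMod 2}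
  (hflat : ∀ α ∈ fourierSupport f, |fc f α| = c) (ha : #(fourierSupport f) * c = f a)
include hflat ha

lemma fc_eq_mul_signChar_of_flat {α : Fin n → ZMod 2} (hα : α ∈ fourierSupport f) :
    fc f α = c * signChar (α ⬝ᵥ a) := by
  have hle : ∀ β ∈ fourierSupport f, fc f β * signChar (β ⬝ᵥ a) ≤ c := fun β hβ =>
    (le_abs_self _).trans_eq (by rw [abs_mul, hflat β hβ, abs_signChar, mul_one])
  have hsum :
      ∑ β ∈ fourierSupport f, fc f β * signChar (β ⬝ᵥ a) = ∑ β ∈ fourierSupport f, c := by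
    rw [sum_fourierSupport_fc_mul, sum_fc_mul_signChar, sum_const, nsmul_eq_mul, ha]
  rw [← (sum_eq_sum_iff_of_le hle).1 hsum α hα, mul_assoc, signChar_mul_self, mul_one]

lemma eq_mul_sum_signChar_of_flat (x : Fin n → ZMod 2) :
    f x = c * ∑ α ∈ fourierSupport f, signChar (α ⬝ᵥ (a + x)) := by
  rw [← sum_fc_mul_signChar f x, ← sum_fourierSupport_fc_mul, mul_sum]
  refine sum_congr rfl fun α hα => ?_
  rw [fc_eq_mul_signChar_of_flat hflat ha hα, dotProduct_add, AddChar.map_add_eq_mul, mul_assoc]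

end FlatSpectrum

lemma sum_fc_indicator_sq (S : Finset (Fin n → ZMod 2)) :
    ∑ α, fc (fun x => if x ∈ S then (1 : ℝ) else 0) α ^ 2 = #S / 2 ^ n := by
  rw [sum_fc_sq]
  simp

def dotOrthogonal {R ι : Type*} [CommSemiring R] [Fintype ι] (T : Set (ι → R)) :
    Submodule R (ι → R) where
  carrier := {v | ∀ α ∈ T, α ⬝ᵥ v = 0}
  add_mem' hv hw α hα := by rw [dotProduct_add, hv α hα, hw α hα, add_zero]
  zero_mem' α _ := dotProduct_zero α
  smul_mem' c v hv α hα := by rw [dotProduct_smul, hv α hα, smul_zero]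

lemma mem_dotOrthogonal {R ι : Type*} [CommSemiring R] [Fintype ι] {T : Set (ι → R)}
    {v : ι → R} : v ∈ dotOrthogonal T ↔ ∀ α ∈ T, α ⬝ᵥ v = 0 := Iff.rfl

lemma mem_iff_add_mem_dotOrthogonal_of_flat {S : Finset (Fin n → ZMod 2)} {c : ℝ}
    {a : Fin n → ZMod 2}
    (hflat : ∀ α ∈ fourierSupport (fun x => if x ∈ S then (1 : ℝ) else 0),
      |fc (fun x => if x ∈ S then (1 : ℝ) else 0) α| = c)
    (hc : #(fourierSupport (fun x => if x ∈ S then (1 : ℝ) else 0)) * c = 1) (ha : a ∈ S)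
    (x : Fin n → ZMod 2) :
    x ∈ S ↔ a + x ∈ dotOrthogonal
      (fourierSupport (fun x => if x ∈ S then (1 : ℝ) else 0) : Set (Fin n → ZMod 2)) := by
  set T := fourierSupport (fun x => if x ∈ S then (1 : ℝ) else 0)
  have hc0 : c ≠ 0 := right_ne_zero_of_mul_eq_one hc
  have hx := eq_mul_sum_signChar_of_flat hflat (hc.trans (if_pos ha).symm) x
  calc x ∈ S ↔ c * ∑ α ∈ T, signChar (α ⬝ᵥ (a + x)) = c * ∑ α ∈ T, 1 := by
        rw [← hx, sum_const, nsmul_one, mul_comm, hc]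
        simp
    _ ↔ ∑ α ∈ T, signChar (α ⬝ᵥ (a + x)) = ∑ α ∈ T, 1 := mul_right_inj' hc0
    _ ↔ ∀ α ∈ T, signChar (α ⬝ᵥ (a + x)) = 1 :=
        sum_eq_sum_iff_of_le fun _ _ => signChar_le_one _
    _ ↔ ∀ α ∈ T, α ⬝ᵥ (a + x) = 0 := by simp only [signChar_eq_one_iff]
    _ ↔ a + x ∈ dotOrthogonal (T : Set (Fin n → ZMod 2)) := mem_dotOrthogonal.symm

lemma eq_image_add_of_mem_iff {S : Set (Fin n → ZMod 2)}
    {V : Submodule (ZMod 2) (Fin n → ZMod 2)} {a : Fin n → ZMod 2}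
    (h : ∀ x, x ∈ S ↔ a + x ∈ V) : S = (a + ·) '' (V : Set (Fin n → ZMod 2)) := by
  rw [Set.image_add_left, show -a = a from funext fun i => ZMod.neg_eq_self_mod_two _]
  exact Set.ext h

lemma finrank_eq_of_natCard_eq_pow {K V : Type*} [Field K] [Finite K] [AddCommGroup V]
    [Module K V] [Module.Finite K V] {m : ℕ} (h : Nat.card V = Nat.card K ^ m) :
    Module.finrank K V = m :=
  Nat.pow_right_injective (Finite.one_lt_card_iff_nontrivial.2 inferInstance)
    (Module.natCard_eq_pow_finrank.symm.trans h)

theorem stmt_4_general {n k : ℕ} (hk : k ≤ n) (S : Finset (Fin n → ZMod 2))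
    (hS : S.card = 2 ^ (n - k))
    (h : ∀ α : Fin n → ZMod 2,
      |fc (fun x => if x ∈ S then (1 : ℝ) else 0) α| = 0 ∨
      |fc (fun x => if x ∈ S then (1 : ℝ) else 0) α| = 1 / 2 ^ k) :
    ∃ (a : Fin n → ZMod 2) (V : Submodule (ZMod 2) (Fin n → ZMod 2)),
      Module.finrank (ZMod 2) V = n - k ∧
      (S : Set (Fin n → ZMod 2)) = (a + ·) '' (V : Set (Fin n → ZMod 2)) := by
  set f : (Fin n → ZMod 2) → ℝ := fun x => if x ∈ S then 1 else 0
  obtain ⟨a, ha⟩ : S.Nonempty := card_pos.mp (by rw [hS]; positivity)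
  have hflat : ∀ α ∈ fourierSupport f, |fc f α| = 1 / 2 ^ k := fun α hα =>
    (h α).resolve_left (abs_ne_zero.2 (mem_fourierSupport.1 hα))
  have hcard : #(fourierSupport f) * (1 / 2 ^ k : ℝ) = 1 := by
    have hparseval := card_fourierSupport_mul_sq hflat
    have h2n : (2 : ℝ) ^ n = 2 ^ (n - k) * 2 ^ k := by rw [← pow_add, Nat.sub_add_cancel hk]
    rw [sum_fc_indicator_sq, hS, h2n] at hparseval
    push_cast at hparseval
    field_simp at hparseval ⊢
    exact hparseval
  have hSV := eq_image_add_of_mem_iff (mem_iff_add_mem_dotOrthogonal_of_flat hflat hcard ha)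
  refine ⟨a, _, finrank_eq_of_natCard_eq_pow ?_, hSV⟩
  rw [Nat.card_zmod, ← hS, ← Set.ncard_coe_finset, hSV,
    Set.ncard_image_of_injective _ (add_right_injective a)]
  rfl

/-- Rothschild–van Lint. -/
theorem stmt_4 {n k : ℕ} (hn : 1 ≤ n) (hk : k ≤ n) (S : Finset (Fin n → ZMod 2))
    (hS : S.card = 2 ^ (n - k))
    (h : ∀ α : Fin n → ZMod 2,
      |fc (fun x => if x ∈ S then (1 : ℝ) else 0) α| = 0 ∨
      |fc (fun x => if x ∈ S then (1 : ℝ) else 0) α| = 1 / 2 ^ k) :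
    ∃ (a : Fin n → ZMod 2) (V : Submodule (ZMod 2) (Fin n → ZMod 2)),
      Module.finrank (ZMod 2) V = n - k ∧
      (S : Set (Fin n → ZMod 2)) = (a + ·) '' (V : Set (Fin n → ZMod 2)) :=
  stmt_4_general hk S hS h
end

section
/- Let f : F_2^n → {0,1} with f(0)=1, f̂(0) = 1/2^{k−1}, and all other Fourier coefficients in {0, ±1/2^k}. With A = {α : f̂(α) = 1/2^k} and B = {β : f̂(β) = −1/2^k}, the sumset B+B is contained in A ∪ {0}. -/
/-!
Writing `χ_α(x) = (-1)^⟨α,x⟩`, we have `f̂(0) + f̂(α) + f̂(β) + f̂(α+β) = E[f · (1 + χ_α)(1 + χ_β)]`.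
Each term is nonnegative because `f ≥ 0` and `χ ≥ -1`, and the term at `x = 0` is `4 f(0) > 0`.
For `α, β ∈ B` the left side is `2/2^k - 2/2^k + f̂(α+β)`, so `f̂(α+β) > 0`, i.e. `α + β ∈ A`.
-/

open Finset Pointwise

lemma neg_one_pow_zmod_two_val_add {R : Type*} [Ring R] (a b : ZMod 2) :
    (-1 : R) ^ (a + b).val = (-1) ^ a.val * (-1) ^ b.val := by
  rw [ZMod.val_add, ← neg_one_pow_eq_pow_mod_two, pow_add]

namespace Walsh

variable {n : ℕ}

noncomputable def walsh (α x : Fin n → ZMod 2) : ℝ :=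
  (-1 : ℝ) ^ (∑ i, α i * x i : ZMod 2).val

lemma fc_eq_sum_walsh (f : (Fin n → ZMod 2) → ℝ) (α : Fin n → ZMod 2) :
    fc f α = (∑ x, f x * walsh α x) / 2 ^ n := rfl

@[simp] lemma walsh_zero_left (x : Fin n → ZMod 2) : walsh 0 x = 1 := by
  simp [walsh]

@[simp] lemma walsh_zero_right (α : Fin n → ZMod 2) : walsh α 0 = 1 := by
  simp [walsh]

lemma walsh_add_left (α β x : Fin n → ZMod 2) :
    walsh (α + β) x = walsh α x * walsh β x := by
  simp only [walsh, Pi.add_apply, add_mul, sum_add_distrib, neg_one_pow_zmod_two_val_add]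

lemma neg_one_le_walsh (α x : Fin n → ZMod 2) : -1 ≤ walsh α x := by
  rcases neg_one_pow_eq_or ℝ (∑ i, α i * x i : ZMod 2).val with h | h <;>
    simp only [walsh, h] <;> norm_num

lemma fc_zero_add_fc_add_fc_add_fc_add (f : (Fin n → ZMod 2) → ℝ) (α β : Fin n → ZMod 2) :
    fc f 0 + fc f α + fc f β + fc f (α + β) =
      (∑ x, f x * ((1 + walsh α x) * (1 + walsh β x))) / 2 ^ n := by
  simp only [fc_eq_sum_walsh, walsh_add_left, walsh_zero_left, ← add_div, ← sum_add_distrib]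
  congr 1
  exact sum_congr rfl fun x _ ↦ by ring

lemma fc_zero_add_fc_add_fc_add_fc_add_pos {f : (Fin n → ZMod 2) → ℝ} (hf : ∀ x, 0 ≤ f x)
    (hf0 : 0 < f 0) (α β : Fin n → ZMod 2) :
    0 < fc f 0 + fc f α + fc f β + fc f (α + β) := by
  rw [fc_zero_add_fc_add_fc_add_fc_add]
  have hterm : ∀ x, 0 ≤ f x * ((1 + walsh α x) * (1 + walsh β x)) := fun x ↦
    mul_nonneg (hf x) (mul_nonneg (by linarith [neg_one_le_walsh α x])
      (by linarith [neg_one_le_walsh β x]))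
  have hsum : f 0 * ((1 + walsh α 0) * (1 + walsh β 0)) ≤
      ∑ x, f x * ((1 + walsh α x) * (1 + walsh β x)) :=
    single_le_sum (fun x _ ↦ hterm x) (mem_univ 0)
  simp only [walsh_zero_right] at hsum
  exact div_pos (by linarith) (by positivity)

end Walsh

open Walsh in
theorem stmt_6_general {n k : ℕ} (hk : 1 ≤ k) (f : (Fin n → ZMod 2) → ℝ)
    (hf : ∀ x, f x = 0 ∨ f x = 1) (hf0 : f 0 = 1)
    (h0 : fc f 0 = 1 / 2 ^ (k - 1))
    (h : ∀ α : Fin n → ZMod 2, α ≠ 0 →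
      fc f α = 0 ∨ fc f α = 1 / 2 ^ k ∨ fc f α = -(1 / 2 ^ k)) :
    {β : Fin n → ZMod 2 | fc f β = -(1 / 2 ^ k)} +
      {β : Fin n → ZMod 2 | fc f β = -(1 / 2 ^ k)} ⊆
      {α : Fin n → ZMod 2 | fc f α = 1 / 2 ^ k} ∪ {0} := by
  rintro _ ⟨β₁, hβ₁, β₂, hβ₂, rfl⟩
  by_cases hz : β₁ + β₂ = 0
  · exact Or.inr hz
  have hfnn : ∀ x, 0 ≤ f x := fun x ↦ by rcases hf x with hx | hx <;> simp [hx]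
  have hsum := fc_zero_add_fc_add_fc_add_fc_add_pos hfnn (by simp [hf0]) β₁ β₂
  have h0' : fc f 0 = 2 * (1 / 2 ^ k) := by
    obtain ⟨k, rfl⟩ := Nat.exists_eq_add_of_le' hk
    rw [h0, Nat.add_sub_cancel, pow_succ]
    field_simp
  rw [h0', hβ₁, hβ₂] at hsum
  have hpos : 0 < fc f (β₁ + β₂) := by linarith
  rcases h _ hz with h' | h' | h'
  · linarith
  · exact Or.inl h'
  · have : (0 : ℝ) < 1 / 2 ^ k := by positivity
    linarith

theorem stmt_6 {n k : ℕ} (hk : 1 ≤ k) (hn : k ≤ n) (f : (Fin n → ZMod 2) → ℝ)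
    (hf : ∀ x, f x = 0 ∨ f x = 1) (hf0 : f 0 = 1)
    (h0 : fc f 0 = 1 / 2 ^ (k - 1))
    (h : ∀ α : Fin n → ZMod 2, α ≠ 0 →
      fc f α = 0 ∨ fc f α = 1 / 2 ^ k ∨ fc f α = -(1 / 2 ^ k)) :
    {β : Fin n → ZMod 2 | fc f β = -(1 / 2 ^ k)} +
      {β : Fin n → ZMod 2 | fc f β = -(1 / 2 ^ k)} ⊆
      {α : Fin n → ZMod 2 | fc f α = 1 / 2 ^ k} ∪ {0} :=
  stmt_6_general hk f hf hf0 h0 h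
end

section
/- Under the hypotheses that f : F_2^n → {0,1} has f(0)=1, f̂(0)=1/2^{k−1}, and all other Fourier coefficients in {0, ±1/2^k}, the set B = {β : f̂(β) = −1/2^k} is sum-free: for all β_1, β_2, β_3 ∈ B, β_1 + β_2 ≠ β_3. -/
/-
For `f ≥ 0` and any `α, β`, expanding `∑ₓ f x (1 + χ_α x)(1 + χ_β x) ≥ 0` with the
multiplicativity `χ_α χ_β = χ_{α+β}` of the characters `χ_α = walshChar α` gives
`f̂(0) + f̂(α) + f̂(β) + f̂(α + β) ≥ 0`. If `α, β, α + β` all had coefficient `-1/2^k`, the left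
side would be at most `2/2^k - 3/2^k < 0`.
-/

open Finset

noncomputable section

variable {n : ℕ}

def walshChar (α x : Fin n → ZMod 2) : ℝ :=
  (-1) ^ (∑ i, α i * x i : ZMod 2).val

lemma fc_eq_sum_mul_walshChar (f : (Fin n → ZMod 2) → ℝ) (α : Fin n → ZMod 2) :
    fc f α = (∑ x, f x * walshChar α x) / 2 ^ n :=
  rfl

@[simp]
lemma walshChar_zero_left (x : Fin n → ZMod 2) : walshChar 0 x = 1 := by
  simp [walshChar]

lemma walshChar_add_left (α β x : Fin n → ZMod 2) :
    walshChar (α + β) x = walshChar α x * walshChar β x := by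
  have hval : (∑ i, (α + β) i * x i : ZMod 2) = ∑ i, α i * x i + ∑ i, β i * x i := by
    simp only [Pi.add_apply, add_mul, sum_add_distrib]
  rw [walshChar, walshChar, walshChar, hval, ← pow_add, ZMod.val_add,
    ← neg_one_pow_eq_pow_mod_two]

lemma one_add_walshChar_nonneg (α x : Fin n → ZMod 2) : 0 ≤ 1 + walshChar α x := by
  rcases neg_one_pow_eq_or ℝ (∑ i, α i * x i : ZMod 2).val with h | h <;>
    simp [walshChar, h]

lemma fc_zero_add_fc_add_fc_add_fc_add_nonneg {f : (Fin n → ZMod 2) → ℝ} (hf : ∀ x, 0 ≤ f x)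
    (α β : Fin n → ZMod 2) : 0 ≤ fc f 0 + fc f α + fc f β + fc f (α + β) := by
  have hexpand : fc f 0 + fc f α + fc f β + fc f (α + β) =
      (∑ x, f x * (1 + walshChar α x) * (1 + walshChar β x)) / 2 ^ n := by
    simp only [fc_eq_sum_mul_walshChar, walshChar_zero_left, walshChar_add_left, ← add_div,
      ← sum_add_distrib]
    congr 1
    exact sum_congr rfl fun x _ => by ring
  rw [hexpand]
  have hterm (x : Fin n → ZMod 2) : 0 ≤ f x * (1 + walshChar α x) * (1 + walshChar β x) :=
    mul_nonneg (mul_nonneg (hf x) (one_add_walshChar_nonneg α x)) (one_add_walshChar_nonneg β x)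
  exact div_nonneg (sum_nonneg fun x _ => hterm x) (by positivity)

end

-- Equality for `k ≥ 1`; at `k = 0` the truncated `k - 1` makes the left side `1`.
lemma one_div_two_pow_pred_le (k : ℕ) : (1 : ℝ) / 2 ^ (k - 1) ≤ 2 * (1 / 2 ^ k) := by
  rcases k with _ | k
  · norm_num
  · rw [Nat.add_sub_cancel, pow_succ]
    field_simp
    rfl

theorem stmt_7_general {n k : ℕ} (f : (Fin n → ZMod 2) → ℝ)
    (hf : ∀ x, f x = 0 ∨ f x = 1)
    (h0 : fc f 0 = 1 / 2 ^ (k - 1)) :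
    ∀ β₁ ∈ {β : Fin n → ZMod 2 | fc f β = -(1 / 2 ^ k)},
      ∀ β₂ ∈ {β : Fin n → ZMod 2 | fc f β = -(1 / 2 ^ k)},
        ∀ β₃ ∈ {β : Fin n → ZMod 2 | fc f β = -(1 / 2 ^ k)},
          β₁ + β₂ ≠ β₃ := by
  rintro β₁ hβ₁ β₂ hβ₂ β₃ hβ₃ rfl
  have hf_nonneg (x : Fin n → ZMod 2) : 0 ≤ f x := by
    rcases hf x with hx | hx <;> simp [hx]
  have key := fc_zero_add_fc_add_fc_add_fc_add_nonneg hf_nonneg β₁ β₂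
  rw [h0, Set.mem_ofPred_eq.mp hβ₁, Set.mem_ofPred_eq.mp hβ₂, Set.mem_ofPred_eq.mp hβ₃] at key
  have hpos : (0 : ℝ) < 1 / 2 ^ k := by positivity
  linarith [one_div_two_pow_pred_le k]

theorem stmt_7 {n k : ℕ} (hk : 1 ≤ k) (hn : k ≤ n) (f : (Fin n → ZMod 2) → ℝ)
    (hf : ∀ x, f x = 0 ∨ f x = 1) (hf0 : f 0 = 1)
    (h0 : fc f 0 = 1 / 2 ^ (k - 1))
    (h : ∀ α : Fin n → ZMod 2, α ≠ 0 →
      fc f α = 0 ∨ fc f α = 1 / 2 ^ k ∨ fc f α = -(1 / 2 ^ k)) :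
    ∀ β₁ ∈ {β : Fin n → ZMod 2 | fc f β = -(1 / 2 ^ k)},
      ∀ β₂ ∈ {β : Fin n → ZMod 2 | fc f β = -(1 / 2 ^ k)},
        ∀ β₃ ∈ {β : Fin n → ZMod 2 | fc f β = -(1 / 2 ^ k)},
          β₁ + β₂ ≠ β₃ :=
  stmt_7_general f hf h0
end

section
/- Under the hypotheses that f : F_2^n → {0,1} has f(0)=1, f̂(0)=1/2^{k−1}, and all other Fourier coefficients in {0, ±1/2^k}, the sets 2B and 3B are disjoint, where B = {β : f̂(β) = −1/2^k}, 2B = B+B, and 3B = B+B+B. -/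
open Finset Pointwise

/-!
For Boolean `f` (so `f * f = f`), Fourier inversion and the convolution identity give, for every
`β` and with `s γ = f̂ γ + f̂ (γ + β)`,
`∑ γ, s γ * (s γ - c) = 2 * (f̂ 0 + f̂ β - c * f 0)`.
If all Fourier coefficients are integer multiples of `c`, every summand is nonnegative, since no
multiple of `c` lies strictly between `0` and `c`. For `c = 2⁻ᵏ` and `β ∈ B` the right-hand side
vanishes, so `f̂ γ + f̂ (γ + β) ∈ {0, c}` for all `γ`. Taking `γ ∈ B` gives `f̂ ≥ c` on `B + B`;
taking `γ ∈ B + B` then gives `f̂ ≤ 0` on `B + B + B`.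
-/

section
variable {n : ℕ}

theorem add_eq_zero_iff_eq_of_zmod_two {x y : Fin n → ZMod 2} : x + y = 0 ↔ x = y := by
  rw [add_eq_zero_iff_eq_neg, show -y = y from funext fun i => CharTwo.neg_eq (y i)]

noncomputable def walsh (α : Fin n → ZMod 2) : AddChar (Fin n → ZMod 2) ℝ :=
  (AddChar.zmodChar 2 (by norm_num : (-1 : ℝ) ^ 2 = 1)).compAddMonoidHom
    (AddMonoidHom.mk' (α ⬝ᵥ ·) (dotProduct_add α))

theorem walsh_apply (α x : Fin n → ZMod 2) : walsh α x = (-1) ^ (α ⬝ᵥ x).val := rfl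

theorem fc_eq_sum_walsh (f : (Fin n → ZMod 2) → ℝ) (α : Fin n → ZMod 2) :
    fc f α = (∑ x, f x * walsh α x) / 2 ^ n := rfl

theorem walsh_comm (α x : Fin n → ZMod 2) : walsh α x = walsh x α := by
  rw [walsh_apply, walsh_apply, dotProduct_comm]

theorem walsh_add (α β x : Fin n → ZMod 2) : walsh (α + β) x = walsh α x * walsh β x := by
  rw [walsh_comm, AddChar.map_add_eq_mul, walsh_comm α, walsh_comm β]

theorem walsh_eq_zero_iff {α : Fin n → ZMod 2} : walsh α = 0 ↔ α = 0 := by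
  refine ⟨fun h => funext fun i => ?_, fun h => ?_⟩
  · have hi := DFunLike.congr_fun h (Pi.single i 1)
    rw [walsh_apply, AddChar.zero_apply, dotProduct_single, mul_one] at hi
    obtain ⟨m, hm⟩ := (neg_one_pow_eq_one_iff_even (by norm_num)).mp hi
    exact (ZMod.val_eq_zero _).mp (by have := ZMod.val_lt (α i); omega)
  · ext x; simp [walsh_apply, h]

theorem sum_walsh_apply (z : Fin n → ZMod 2) :
    ∑ γ, walsh γ z = if z = 0 then 2 ^ n else 0 := by
  simp_rw [walsh_comm _ z, AddChar.sum_eq_ite, walsh_eq_zero_iff]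
  simp

theorem sum_fc (f : (Fin n → ZMod 2) → ℝ) : ∑ α, fc f α = f 0 := by
  calc ∑ α, fc f α = (∑ x, f x * ∑ α, walsh α x) / 2 ^ n := by
        simp_rw [fc_eq_sum_walsh, ← sum_div, mul_sum]; rw [sum_comm]
    _ = f 0 := by simp [sum_walsh_apply]

theorem sum_fc_mul_fc_add (f g : (Fin n → ZMod 2) → ℝ) (α : Fin n → ZMod 2) :
    ∑ γ, fc f γ * fc g (γ + α) = fc (f * g) α := by
  calc ∑ γ, fc f γ * fc g (γ + α)
      = (∑ x, ∑ y, f x * g y * walsh α y * ∑ γ, walsh γ (x + y)) / 2 ^ n / 2 ^ n := by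
        simp_rw [fc_eq_sum_walsh, div_mul_div_comm, sum_mul_sum, ← sum_div, mul_sum, walsh_add,
          AddChar.map_add_eq_mul]
        rw [div_div, sum_comm]
        refine congrArg (· / _) (sum_congr rfl fun x _ => ?_)
        rw [sum_comm]
        exact sum_congr rfl fun y _ => sum_congr rfl fun γ _ => by ring
    _ = (∑ x, f x * g x * walsh α x) / 2 ^ n := by
        congr 1
        simp_rw [sum_walsh_apply, add_eq_zero_iff_eq_of_zmod_two, mul_ite, mul_zero, sum_ite_eq,
          mem_univ, if_true]
        rw [← sum_mul, mul_div_cancel_right₀ _ (by positivity)]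
    _ = fc (f * g) α := rfl

theorem int_mul_mul_sub_nonneg (m : ℤ) (c : ℝ) : 0 ≤ m * c * (m * c - c) := by
  have hm : (0 : ℤ) ≤ m * (m - 1) := by rcases le_or_gt m 0 with h | h <;> nlinarith
  have hmR : (0 : ℝ) ≤ m * (m - 1) := by exact_mod_cast hm
  calc (0 : ℝ) ≤ c ^ 2 * (m * (m - 1)) := mul_nonneg (sq_nonneg c) hmR
    _ = m * c * (m * c - c) := by ring

theorem sum_fc_add_fc_add_mul_sub {f : (Fin n → ZMod 2) → ℝ} (hf : f * f = f) (c : ℝ)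
    (β : Fin n → ZMod 2) :
    ∑ γ, (fc f γ + fc f (γ + β)) * (fc f γ + fc f (γ + β) - c) =
      2 * (fc f 0 + fc f β - c * f 0) := by
  have hsq : ∑ γ, fc f γ * fc f γ = fc f 0 := by simpa [hf] using sum_fc_mul_fc_add f f 0
  have hcross : ∑ γ, fc f γ * fc f (γ + β) = fc f β := by
    simpa [hf] using sum_fc_mul_fc_add f f β
  have hshift (g : (Fin n → ZMod 2) → ℝ) : ∑ γ, g (γ + β) = ∑ γ, g γ :=
    Equiv.sum_comp (Equiv.addRight β) g
  have hexpand (u v : ℝ) :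
      (u + v) * (u + v - c) = u * u + v * v + 2 * (u * v) - c * u - c * v := by ring
  simp_rw [hexpand]
  rw [sum_sub_distrib, sum_sub_distrib, sum_add_distrib, sum_add_distrib, ← mul_sum, ← mul_sum,
    ← mul_sum, hshift (fun γ => fc f γ * fc f γ), hshift (fc f), hsq, hcross, sum_fc]
  ring

theorem fc_add_fc_add_eq_zero_or_eq {f : (Fin n → ZMod 2) → ℝ} (hf : f * f = f) {c : ℝ}
    (hmul : ∀ α, ∃ m : ℤ, fc f α = m * c) {β : Fin n → ZMod 2}
    (hβ : fc f 0 + fc f β = c * f 0) (γ : Fin n → ZMod 2) :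
    fc f γ + fc f (γ + β) = 0 ∨ fc f γ + fc f (γ + β) = c := by
  have hnonneg (γ : Fin n → ZMod 2) :
      0 ≤ (fc f γ + fc f (γ + β)) * (fc f γ + fc f (γ + β) - c) := by
    obtain ⟨m, hm⟩ := hmul γ
    obtain ⟨m', hm'⟩ := hmul (γ + β)
    rw [hm, hm', ← add_mul, ← Int.cast_add]
    exact int_mul_mul_sub_nonneg _ c
  have hsum := sum_fc_add_fc_add_mul_sub hf c β
  rw [hβ, sub_self, mul_zero] at hsum
  have hγ := (sum_eq_zero_iff_of_nonneg fun γ _ => hnonneg γ).mp hsum γ (mem_univ γ)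
  rcases mul_eq_zero.mp hγ with h | h
  · exact Or.inl h
  · exact Or.inr (sub_eq_zero.mp h)

end

theorem stmt_8_general {n k : ℕ} (hk : 1 ≤ k) (f : (Fin n → ZMod 2) → ℝ)
    (hf : ∀ x, f x = 0 ∨ f x = 1) (hf0 : f 0 = 1)
    (h0 : fc f 0 = 1 / 2 ^ (k - 1))
    (h : ∀ α : Fin n → ZMod 2, α ≠ 0 →
      fc f α = 0 ∨ fc f α = 1 / 2 ^ k ∨ fc f α = -(1 / 2 ^ k)) :
    ({β : Fin n → ZMod 2 | fc f β = -(1 / 2 ^ k)} +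
        {β : Fin n → ZMod 2 | fc f β = -(1 / 2 ^ k)}) ∩
      ({β : Fin n → ZMod 2 | fc f β = -(1 / 2 ^ k)} +
        {β : Fin n → ZMod 2 | fc f β = -(1 / 2 ^ k)} +
        {β : Fin n → ZMod 2 | fc f β = -(1 / 2 ^ k)}) = ∅ := by
  set c : ℝ := 1 / 2 ^ k
  have hc : 0 < c := by positivity
  have hzero : fc f 0 = 2 * c := by
    have hpow : (2 : ℝ) ^ k = 2 * 2 ^ (k - 1) := by rw [← pow_succ']; congr; omega
    rw [h0, show c = 1 / 2 ^ k from rfl, hpow]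
    field_simp
  have hidem : f * f = f := funext fun x => by rcases hf x with hx | hx <;> simp [hx]
  have hmul (α : Fin n → ZMod 2) : ∃ m : ℤ, fc f α = m * c := by
    rcases eq_or_ne α 0 with rfl | hα
    · exact ⟨2, by rw [hzero]; norm_num⟩
    · rcases h α hα with hv | hv | hv
      exacts [⟨0, by rw [hv]; norm_num⟩, ⟨1, by rw [hv]; norm_num⟩, ⟨-1, by rw [hv]; norm_num⟩]
  have hpair {β : Fin n → ZMod 2} (hβ : fc f β = -c) (γ : Fin n → ZMod 2) :
      fc f γ + fc f (γ + β) = 0 ∨ fc f γ + fc f (γ + β) = c :=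
    fc_add_fc_add_eq_zero_or_eq hidem hmul (by rw [hzero, hβ, hf0]; ring) γ
  have htwo {b b' : Fin n → ZMod 2} (hb : fc f b = -c) (hb' : fc f b' = -c) :
      c ≤ fc f (b + b') := by
    rcases hpair hb' b with hs | hs <;> linarith
  have hthree {y b : Fin n → ZMod 2} (hy : c ≤ fc f y) (hb : fc f b = -c) :
      fc f (y + b) ≤ 0 := by
    rcases hpair hb y with hs | hs <;> linarith
  rw [Set.eq_empty_iff_forall_notMem]
  rintro x ⟨⟨b₁, hb₁, b₂, hb₂, rfl⟩, _, ⟨b₃, hb₃, b₄, hb₄, rfl⟩, b₅, hb₅, hx⟩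
  have hpos := htwo hb₁ hb₂
  have hneg := hthree (htwo hb₃ hb₄) hb₅
  simp only at hx
  rw [hx] at hneg
  linarith

theorem stmt_8 {n k : ℕ} (hk : 1 ≤ k) (hn : k ≤ n) (f : (Fin n → ZMod 2) → ℝ)
    (hf : ∀ x, f x = 0 ∨ f x = 1) (hf0 : f 0 = 1)
    (h0 : fc f 0 = 1 / 2 ^ (k - 1))
    (h : ∀ α : Fin n → ZMod 2, α ≠ 0 →
      fc f α = 0 ∨ fc f α = 1 / 2 ^ k ∨ fc f α = -(1 / 2 ^ k)) :
    ({β : Fin n → ZMod 2 | fc f β = -(1 / 2 ^ k)} +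
        {β : Fin n → ZMod 2 | fc f β = -(1 / 2 ^ k)}) ∩
      ({β : Fin n → ZMod 2 | fc f β = -(1 / 2 ^ k)} +
        {β : Fin n → ZMod 2 | fc f β = -(1 / 2 ^ k)} +
        {β : Fin n → ZMod 2 | fc f β = -(1 / 2 ^ k)}) = ∅ :=
  stmt_8_general hk f hf hf0 h0 h
end

section
/- (Laba) Let G be an abelian group and A ⊆ G a finite nonempty subset such that |A−A| < (3/2)|A|. Then A−A is a subgroup of G. -/
/-!
For `x = a - b ∈ A - A`, both `A` and `x +ᵥ A` lie in the translate `a +ᵥ (A - A)`, so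
`|A ∪ (x +ᵥ A)| ≤ |A - A| < 3|A|/2` and hence `|A ∩ (x +ᵥ A)| > |A|/2`. For `x, y ∈ A - A` the sets
`A ∩ (x +ᵥ A)` and `A ∩ (y +ᵥ A)` are thus more than half of `A` each, so they meet, say in
`x + u = y + p` with `u, p ∈ A`; then `x - y = p - u ∈ A - A`.
-/

open Finset Pointwise

namespace Finset

variable {G : Type*} [AddCommGroup G] [DecidableEq G] {A : Finset G} {a b x y : G}

lemma union_vadd_subset_vadd_sub (ha : a ∈ A) (hb : b ∈ A) :
    A ∪ ((a - b) +ᵥ A) ⊆ a +ᵥ (A - A) := by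
  intro z hz
  rw [mem_vadd_finset]
  rcases mem_union.1 hz with hz | hz
  · exact ⟨z - a, sub_mem_sub hz ha, by rw [vadd_eq_add]; abel⟩
  · obtain ⟨c, hc, rfl⟩ := mem_vadd_finset.1 hz
    exact ⟨c - b, sub_mem_sub hc hb, by simp only [vadd_eq_add]; abel⟩

lemma card_lt_two_mul_card_inter_vadd (h : 2 * #(A - A) < 3 * #A) (hx : x ∈ A - A) :
    #A < 2 * #(A ∩ (x +ᵥ A)) := by
  obtain ⟨a, ha, b, hb, rfl⟩ := mem_sub.1 hx
  have hunion : #(A ∪ ((a - b) +ᵥ A)) ≤ #(A - A) := by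
    simpa only [card_vadd_finset] using card_le_card (union_vadd_subset_vadd_sub ha hb)
  have hsum := card_union_add_card_inter A ((a - b) +ᵥ A)
  rw [card_vadd_finset] at hsum
  omega

lemma sub_mem_sub_of_vadd_inter_nonempty (h : ((x +ᵥ A) ∩ (y +ᵥ A)).Nonempty) :
    x - y ∈ A - A := by
  obtain ⟨c, hc⟩ := h
  obtain ⟨hcx, hcy⟩ := mem_inter.1 hc
  obtain ⟨u, hu, rfl⟩ := mem_vadd_finset.1 hcx
  obtain ⟨p, hp, hpu⟩ := mem_vadd_finset.1 hcy
  refine mem_sub.2 ⟨p, hp, u, hu, ?_⟩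
  rw [vadd_eq_add, vadd_eq_add] at hpu
  rw [sub_eq_sub_iff_add_eq_add, add_comm, hpu, add_comm]

lemma sub_mem_sub_self_of_two_mul_card_sub_lt (h : 2 * #(A - A) < 3 * #A)
    (hx : x ∈ A - A) (hy : y ∈ A - A) : x - y ∈ A - A := by
  have hx' := card_lt_two_mul_card_inter_vadd h hx
  have hy' := card_lt_two_mul_card_inter_vadd h hy
  have hmeet : ((A ∩ (x +ᵥ A)) ∩ (A ∩ (y +ᵥ A))).Nonempty :=
    inter_nonempty_of_card_lt_card_add_card inter_subset_left inter_subset_left (by omega)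
  exact sub_mem_sub_of_vadd_inter_nonempty
    (hmeet.mono (inter_subset_inter inter_subset_right inter_subset_right))

end Finset

/-- Laba's lemma: if `|A − A| < (3/2)|A|` then `A − A` is a subgroup. -/
theorem stmt_9 {G : Type*} [AddCommGroup G] [DecidableEq G] (A : Finset G)
    (hA : A.Nonempty) (h : 2 * (A - A).card < 3 * A.card) :
    ∃ H : AddSubgroup G, ((A - A : Finset G) : Set G) = (H : Set G) :=
  ⟨AddSubgroup.ofSub _ (coe_nonempty.2 (hA.sub hA))
    fun x hx y hy => sub_eq_add_neg x y ▸ sub_mem_sub_self_of_two_mul_card_sub_lt h hx hy, rfl⟩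
end

section
/- (Main Lemma) Let k ≥ 5 and n ≥ k be integers, and let f : F_2^n → {0,1} be a Boolean function with f̂(0) = 1/2^{k−1} and every other Fourier coefficient equal to 0 or ±1/2^k. Then f is the indicator function of a disjoint union of two affine subspaces of F_2^n, each of dimension n−k. -/
open Finset

/-!
Write `S` for the support of `f`, `Ŝ(γ) = ∑_{x ∈ S} (-1)^⟨γ,x⟩ = 2ⁿ f̂(γ)` and `d = n - k`, so that
`#S = 2^(d+1)` and `Ŝ(γ) ∈ {0, ±2^d}` for `γ ≠ 0`.

For `θ` in the spectrum, the points of `S` on the minority side of the hyperplane `θ` form a set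
`C_θ` of size `2^(d-1)` whose own Fourier coefficients are `0` or `±#C_θ`; by Parseval and
Fourier inversion such a set is closed under `x + y + z`, i.e. it is a coset `x + V_θ`.
Fix `x ∈ S`. The `2^(k-1) - 1 ≥ 15` cosets `C_θ` through `x` meet pairwise in `2^(d-2)` points,
so the `(d-1)`-dimensional spaces `V_θ` meet pairwise in dimension `d - 2`. Such a family either
lies in a single `d`-dimensional space `E_x` or is a sunflower, and a sunflower with that many
petals does not fit into `S`. A double count of the pairs `(θ, y)` with `y, y + w ∈ C_θ` shows
that two points of `S` sharing one such `θ` share two, hence define the same block `x + E_x`.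
A block has `2^d` points, at least `3 · 2^(d-2)` of them points of `S` with that block, and
`#S = 2^(d+1)` leaves room for exactly two blocks.
-/

namespace TwoCosets

open scoped Classical

noncomputable section

section FinsetCounting

variable {ι α β : Type*}

theorem sum_one_sub_mul (T : Finset α) (e g : α → ℤ) (he : ∀ x ∈ T, e x = 1 ∨ e x = -1) :
    ∑ x ∈ T, (1 - e x) * g x = 2 * ∑ x ∈ T with e x = -1, g x := by
  rw [sum_filter, mul_sum]
  refine sum_congr rfl fun x hx => ?_
  rcases he x hx with h | h <;> simp [h]

theorem sum_one_sub (T : Finset α) (e : α → ℤ) (he : ∀ x ∈ T, e x = 1 ∨ e x = -1) :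
    ∑ x ∈ T, (1 - e x) = 2 * #{x ∈ T | e x = -1} := by
  simpa using sum_one_sub_mul T e 1 he

theorem card_add_sum_card_sub_le [DecidableEq α] {I : Finset ι} {F : ι → Finset α}
    {Z S : Finset α} (hZS : Z ⊆ S) (hZ : ∀ i ∈ I, Z ⊆ F i) (hF : ∀ i ∈ I, F i ⊆ S)
    (hpair : ∀ i ∈ I, ∀ j ∈ I, i ≠ j → F i ∩ F j ⊆ Z) :
    #Z + ∑ i ∈ I, (#(F i) - #Z) ≤ #S := by
  have hdisj : (I : Set ι).PairwiseDisjoint fun i => F i \ Z := fun i hi j hj hij =>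
    disjoint_left.2 fun x hxi hxj => (mem_sdiff.1 hxi).2
      (hpair i hi j hj hij (mem_inter.2 ⟨(mem_sdiff.1 hxi).1, (mem_sdiff.1 hxj).1⟩))
  have hZI : Disjoint Z (I.biUnion fun i => F i \ Z) :=
    disjoint_left.2 fun x hx hx' => by
      obtain ⟨i, -, hi⟩ := mem_biUnion.1 hx'
      exact (mem_sdiff.1 hi).2 hx
  calc #Z + ∑ i ∈ I, (#(F i) - #Z) = #(Z ∪ I.biUnion fun i => F i \ Z) := by
        rw [card_union_of_disjoint hZI, card_biUnion hdisj]
        exact congrArg _ (sum_congr rfl fun i hi => (card_sdiff_of_subset (hZ i hi)).symm)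
    _ ≤ #S := card_le_card (union_subset hZS
        (biUnion_subset.2 fun i hi => sdiff_subset.trans (hF i hi)))

theorem exists_two_fibers [DecidableEq α] [DecidableEq β] {s : Finset α} (g : α → β) {m : ℕ}
    (hm : 0 < m) (hs : #s = 2 * m) (hlow : ∀ x ∈ s, 3 * m ≤ 4 * #{y ∈ s | g y = g x})
    (hhigh : ∀ x ∈ s, #{y ∈ s | g y = g x} ≤ m) :
    ∃ x₁ ∈ s, ∃ x₂ ∈ s, g x₁ ≠ g x₂ ∧ s = {y ∈ s | g y = g x₁} ∪ {y ∈ s | g y = g x₂} ∧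
      #{y ∈ s | g y = g x₁} = m ∧ #{y ∈ s | g y = g x₂} = m := by
  have hsum := card_eq_sum_card_image g s
  have hlow' : ∀ b ∈ s.image g, 3 * m ≤ 4 * #{y ∈ s | g y = b} := by
    simp only [mem_image]; rintro _ ⟨x, hx, rfl⟩; exact hlow x hx
  have hhigh' : ∀ b ∈ s.image g, #{y ∈ s | g y = b} ≤ m := by
    simp only [mem_image]; rintro _ ⟨x, hx, rfl⟩; exact hhigh x hx
  have h1 := card_nsmul_le_sum _ _ _ hlow'
  have h2 := sum_le_card_nsmul _ _ _ hhigh'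
  simp only [smul_eq_mul, ← mul_sum] at h1 h2
  have hT : #(s.image g) = 2 := by
    have : #(s.image g) * (3 * m) < 3 * (3 * m) := by nlinarith
    have : #(s.image g) < 3 := lt_of_mul_lt_mul_right this (Nat.zero_le _)
    have : 2 ≤ #(s.image g) := le_of_mul_le_mul_right (show 2 * m ≤ #(s.image g) * m by omega) hm
    omega
  obtain ⟨b₁, b₂, hb, hT⟩ := card_eq_two.1 hT
  rw [hT, sum_pair hb] at hsum
  have hb₁ : b₁ ∈ s.image g := hT ▸ mem_insert_self _ _
  have hb₂ : b₂ ∈ s.image g := hT ▸ mem_insert_of_mem (mem_singleton_self _)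
  have := hhigh' b₁ hb₁
  have := hhigh' b₂ hb₂
  obtain ⟨x₁, hx₁, rfl⟩ := mem_image.1 hb₁
  obtain ⟨x₂, hx₂, rfl⟩ := mem_image.1 hb₂
  refine ⟨x₁, hx₁, x₂, hx₂, hb, ?_, by omega, by omega⟩
  ext y
  simp only [mem_union, mem_filter]
  refine ⟨fun hy => ?_, by rintro (⟨hy, -⟩ | ⟨hy, -⟩) <;> exact hy⟩
  have : g y ∈ s.image g := mem_image_of_mem g hy
  rw [hT] at this
  simpa [hy] using this

end FinsetCounting

section Subspaces

open Module Submodule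

variable {K M : Type*} [DivisionRing K] [AddCommGroup M] [Module K M] [FiniteDimensional K M]

theorem le_sup_or_inf_le {U U' W : Submodule K M} {m : ℕ} (hW : finrank K W = m + 1)
    (hUW : finrank K ↥(U ⊓ W) = m) (hU'W : finrank K ↥(U' ⊓ W) = m)
    (hUU' : finrank K ↥(U ⊓ U') = m) : W ≤ U ⊔ U' ∨ U ⊓ U' ≤ W := by
  by_cases hle : U' ⊓ W ≤ U ⊓ W
  · have heq : U' ⊓ W = U ⊓ W := eq_of_le_of_finrank_eq hle (hU'W.trans hUW.symm)
    have : U ⊓ W = U ⊓ U' :=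
      eq_of_le_of_finrank_eq (le_inf inf_le_left (heq ▸ inf_le_left)) (hUW.trans hUU'.symm)
    exact Or.inr (this ▸ inf_le_right)
  · have hlt : U ⊓ W < U ⊓ W ⊔ U' ⊓ W :=
      lt_of_le_not_ge le_sup_left fun h => hle (le_sup_right.trans h)
    have hsup : U ⊓ W ⊔ U' ⊓ W = W := eq_of_le_of_finrank_le (sup_le inf_le_right inf_le_right)
      (hW ▸ hUW ▸ finrank_lt_finrank_of_lt hlt)
    exact Or.inl (hsup ▸ sup_le_sup inf_le_left inf_le_left)

theorem finrank_sup_eq_add_two {U U' : Submodule K M} {m : ℕ} (hU : finrank K U = m + 1)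
    (hU' : finrank K U' = m + 1) (hUU' : finrank K ↥(U ⊓ U') = m) :
    finrank K ↥(U ⊔ U') = m + 2 := by
  have := finrank_sup_add_finrank_inf_eq U U'
  omega

variable {ι : Type*} {D : Finset ι} {V : ι → Submodule K M} {m : ℕ}

theorem forall_le_sup_of_not_inf_le (hV : ∀ a ∈ D, finrank K (V a) = m + 1)
    (hVV : ∀ a ∈ D, ∀ b ∈ D, a ≠ b → finrank K ↥(V a ⊓ V b) = m)
    {a b c : ι} (ha : a ∈ D) (hb : b ∈ D) (hc : c ∈ D) (hab : a ≠ b)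
    (habc : ¬ V a ⊓ V b ≤ V c) :
    ∀ η ∈ D, V η ≤ V a ⊔ V b := by
  have hca : c ≠ a := by rintro rfl; exact habc inf_le_left
  have hcb : c ≠ b := by rintro rfl; exact habc inf_le_right
  have htri : ∀ x ∈ D, ∀ y ∈ D, ∀ z ∈ D, x ≠ y → z ≠ x → z ≠ y →
      V z ≤ V x ⊔ V y ∨ V x ⊓ V y ≤ V z :=
    fun x hx y hy z hz hxy hzx hzy => le_sup_or_inf_le (hV z hz) (hVV x hx z hz hzx.symm)
      (hVV y hy z hz hzy.symm) (hVV x hx y hy hxy)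
  have hcab : V c ≤ V a ⊔ V b := (htri a ha b hb c hc hab hca hcb).resolve_right habc
  intro η hη
  by_cases hηa : η = a; · exact hηa ▸ le_sup_left
  by_cases hηb : η = b; · exact hηb ▸ le_sup_right
  by_cases hηc : η = c; · exact hηc ▸ hcab
  rcases htri a ha b hb η hη hab hηa hηb with h | h1; · exact h
  rcases htri a ha c hc η hη hca.symm hηa hηc with h | h2
  · exact h.trans (sup_le le_sup_left hcab)
  refine absurd ?_ habc
  have hη' : finrank K ↥(V a ⊓ V η) = m := hVV a ha η hη (Ne.symm hηa)
  have e1 : V a ⊓ V b = V a ⊓ V η :=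
    eq_of_le_of_finrank_eq (le_inf inf_le_left h1) ((hVV a ha b hb hab).trans hη'.symm)
  have e2 : V a ⊓ V c = V a ⊓ V η :=
    eq_of_le_of_finrank_eq (le_inf inf_le_left h2) ((hVV a ha c hc hca.symm).trans hη'.symm)
  exact (e1.trans e2.symm).le.trans inf_le_right

theorem forall_le_sup_or_forall_inf_le (hV : ∀ a ∈ D, finrank K (V a) = m + 1)
    (hVV : ∀ a ∈ D, ∀ b ∈ D, a ≠ b → finrank K ↥(V a ⊓ V b) = m)
    {θ θ' : ι} (hθ : θ ∈ D) (hθ' : θ' ∈ D) (hne : θ ≠ θ') :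
    (∀ η ∈ D, V η ≤ V θ ⊔ V θ') ∨ ∀ a ∈ D, ∀ b ∈ D, a ≠ b → ∀ c ∈ D, V a ⊓ V b ≤ V c := by
  refine or_iff_not_imp_right.2 fun h => ?_
  push Not at h
  obtain ⟨a, ha, b, hb, hab, c, hc, habc⟩ := h
  have hall := forall_le_sup_of_not_inf_le hV hVV ha hb hc hab habc
  have heq : V θ ⊔ V θ' = V a ⊔ V b := eq_of_le_of_finrank_eq (sup_le (hall θ hθ) (hall θ' hθ'))
    (by rw [finrank_sup_eq_add_two (hV θ hθ) (hV θ' hθ') (hVV θ hθ θ' hθ' hne),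
      finrank_sup_eq_add_two (hV a ha) (hV b hb) (hVV a ha b hb hab)])
  exact heq ▸ hall

end Subspaces

abbrev Cube (n : ℕ) := Fin n → ZMod 2

variable {n : ℕ}

theorem add_self_eq_zero (x : Cube n) : x + x = 0 :=
  funext fun i => CharTwo.add_self_eq_zero (x i)

theorem add_add_cancel_left (x y : Cube n) : x + (x + y) = y := by
  rw [← add_assoc, add_self_eq_zero, zero_add]

theorem add_eq_zero_iff_eq {x y : Cube n} : x + y = 0 ↔ x = y := by
  rw [add_eq_zero_iff_eq_neg, neg_eq_of_add_eq_zero_left (add_self_eq_zero y)]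

section Characters

def chi (γ x : Cube n) : ℤ := (-1) ^ (γ ⬝ᵥ x).val

theorem neg_one_pow_val_add (a b : ZMod 2) :
    (-1 : ℤ) ^ (a + b).val = (-1) ^ a.val * (-1) ^ b.val := by
  fin_cases a <;> fin_cases b <;> decide

theorem chi_comm (γ x : Cube n) : chi γ x = chi x γ := by
  rw [chi, chi, dotProduct_comm]

theorem chi_add_right (γ x y : Cube n) : chi γ (x + y) = chi γ x * chi γ y := by
  rw [chi, dotProduct_add, neg_one_pow_val_add]; rfl

theorem chi_add_left (γ δ x : Cube n) : chi (γ + δ) x = chi γ x * chi δ x := by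
  rw [chi_comm, chi_add_right, chi_comm x, chi_comm x]

@[simp] theorem chi_zero_left (x : Cube n) : chi 0 x = 1 := by simp [chi]

@[simp] theorem chi_zero_right (γ : Cube n) : chi γ 0 = 1 := by simp [chi]

theorem chi_eq_one_or_eq_neg_one (γ x : Cube n) : chi γ x = 1 ∨ chi γ x = -1 := by
  rw [chi, neg_one_pow_eq_pow_mod_two]
  rcases Nat.mod_two_eq_zero_or_one (γ ⬝ᵥ x).val with h | h <;> simp [h]

theorem chi_mul_self (γ x : Cube n) : chi γ x * chi γ x = 1 := by
  rw [← chi_add_right, add_self_eq_zero, chi_zero_right]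

theorem sum_chi (z : Cube n) : ∑ γ, chi γ z = if z = 0 then 2 ^ n else 0 := by
  split_ifs with hz
  · simp [hz]
  obtain ⟨i, hi⟩ : ∃ i, z i ≠ 0 := by simpa [funext_iff] using hz
  have he : chi (Pi.single i 1) z = -1 := by
    have : ∀ c : ZMod 2, c ≠ 0 → c = 1 := by decide
    simp only [chi, single_dotProduct, one_mul, this _ hi]
    rfl
  have := Equiv.sum_comp (Equiv.addRight (Pi.single i 1 : Cube n)) (fun γ => chi γ z)
  simp only [Equiv.coe_addRight, chi_add_left, he, mul_neg_one, sum_neg_distrib] at this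
  linarith

end Characters

/-- `2 ^ n` times the Fourier coefficient of the indicator function of `S`. -/
def walsh (S : Finset (Cube n)) (γ : Cube n) : ℤ := ∑ x ∈ S, chi γ x

section Walsh

variable {S : Finset (Cube n)}

@[simp] theorem walsh_zero : walsh S 0 = #S := by simp [walsh]

theorem abs_walsh_le (γ : Cube n) : |walsh S γ| ≤ #S := by
  calc |walsh S γ| ≤ ∑ x ∈ S, |chi γ x| := abs_sum_le_sum_abs _ _
    _ = #S := by
      rw [card_eq_sum_ones, Nat.cast_sum]
      refine sum_congr rfl fun x _ => ?_
      rcases chi_eq_one_or_eq_neg_one γ x with h | h <;> simp [h]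

theorem sum_walsh_mul_chi (x : Cube n) :
    ∑ γ, walsh S γ * chi γ x = if x ∈ S then 2 ^ n else 0 := by
  simp only [walsh, sum_mul, ← chi_add_right]
  rw [sum_comm]
  simp only [sum_chi, add_eq_zero_iff_eq, sum_ite_eq']

theorem sum_walsh_sq_mul_chi (w : Cube n) :
    ∑ γ, walsh S γ ^ 2 * chi γ w = 2 ^ n * #{x ∈ S | x + w ∈ S} := by
  calc ∑ γ, walsh S γ ^ 2 * chi γ w = ∑ y ∈ S, ∑ γ, walsh S γ * chi γ (y + w) := by
        rw [sum_comm]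
        refine sum_congr rfl fun γ _ => ?_
        simp only [chi_add_right, ← mul_sum, ← sum_mul, walsh]
        ring
    _ = 2 ^ n * #{x ∈ S | x + w ∈ S} := by
        simp only [sum_walsh_mul_chi, sum_ite, sum_const_zero, add_zero, sum_const, nsmul_eq_mul]
        ring

theorem sum_walsh_sq : ∑ γ, walsh S γ ^ 2 = 2 ^ n * #S := by
  simpa using sum_walsh_sq_mul_chi (S := S) 0

end Walsh

section Cosets

variable {V V' : Submodule (ZMod 2) (Cube n)} {x y : Cube n}

def coset (x : Cube n) (V : Submodule (ZMod 2) (Cube n)) : Finset (Cube n) := {y | x + y ∈ V}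

@[simp] theorem mem_coset : y ∈ coset x V ↔ x + y ∈ V := by simp [coset]

theorem self_mem_coset : x ∈ coset x V := by simp [add_self_eq_zero]

theorem coe_coset : (coset x V : Set (Cube n)) = (x + ·) '' V := by
  ext y
  simp only [mem_coset, Set.mem_image, SetLike.mem_coe]
  exact ⟨fun h => ⟨_, h, add_add_cancel_left x y⟩,
    by rintro ⟨u, hu, rfl⟩; rwa [add_add_cancel_left]⟩

theorem card_coset : #(coset x V) = 2 ^ Module.finrank (ZMod 2) V := by
  calc #(coset x V) = #{u | u ∈ V} :=
        card_nbij' (x + ·) (x + ·) (fun y hy => by simpa using hy)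
          (fun u hu => by simpa [add_add_cancel_left] using hu)
          (fun _ _ => add_add_cancel_left _ _) (fun _ _ => add_add_cancel_left _ _)
    _ = 2 ^ Module.finrank (ZMod 2) V := by
        rw [← Fintype.card_subtype, Module.card_eq_pow_finrank (K := ZMod 2), ZMod.card]

theorem coset_mono (h : V ≤ V') : coset x V ⊆ coset x V' := fun _ hy =>
  mem_coset.2 (h (mem_coset.1 hy))

theorem coset_inf : coset x (V ⊓ V') = coset x V ∩ coset x V' := by
  ext y; simp

theorem coset_eq_coset (h : x + y ∈ V) : coset x V = coset y V := by
  ext z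
  simp only [mem_coset]
  constructor <;> intro hz <;> have := add_mem h hz
  · rwa [add_comm x y, add_assoc, add_add_cancel_left] at this
  · rwa [add_assoc, add_add_cancel_left] at this

def addStab (T : Finset (Cube n)) : Submodule (ZMod 2) (Cube n) where
  carrier := {u | ∀ x ∈ T, x + u ∈ T}
  add_mem' {u v} hu hv x hx := by simpa only [add_assoc] using hv _ (hu x hx)
  zero_mem' x hx := by simpa using hx
  smul_mem' c u hu := by
    obtain rfl | rfl : c = 0 ∨ c = 1 := by revert c; decide
    · intro x hx; simpa using hx
    · simpa using hu

theorem eq_coset_addStab {T : Finset (Cube n)} (hT : ∀ x ∈ T, ∀ y ∈ T, ∀ z ∈ T, x + y + z ∈ T)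
    (hx : x ∈ T) : T = coset x (addStab T) := by
  ext y
  refine ⟨fun hy => mem_coset.2 fun z hz => ?_, fun hy => ?_⟩
  · rw [← add_assoc]; exact hT z hz x hx y hy
  · simpa [add_add_cancel_left] using (mem_coset.1 hy) x hx

end Cosets

theorem add_add_mem_of_abs_walsh {S : Finset (Cube n)} (hS : S.Nonempty)
    (h : ∀ γ, walsh S γ = 0 ∨ |walsh S γ| = #S) :
    ∀ x ∈ S, ∀ y ∈ S, ∀ z ∈ S, x + y + z ∈ S := by
  have hsq γ : |walsh S γ| * #S = walsh S γ ^ 2 := by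
    rw [← sq_abs]
    rcases h γ with h | h <;> simp [h, sq]
  have hsum : ∑ γ, |walsh S γ| = 2 ^ n := by
    have := sum_walsh_sq (S := S)
    simp only [← hsq, ← sum_mul] at this
    exact mul_right_cancel₀ (by simpa using hS.ne_empty) this
  -- Fourier inversion at `x ∈ S` is `∑ γ, walsh S γ * chi γ x = 2 ^ n = ∑ γ, |walsh S γ|`,
  -- so every term reaches its upper bound.
  have hsign : ∀ x ∈ S, ∀ γ, walsh S γ * chi γ x = |walsh S γ| := by
    intro x hx
    have hle γ : walsh S γ * chi γ x ≤ |walsh S γ| := by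
      rcases chi_eq_one_or_eq_neg_one γ x with h | h <;> simp [h, le_abs_self, neg_le_abs]
    have h0 : ∑ γ, (|walsh S γ| - walsh S γ * chi γ x) = 0 := by
      rw [sum_sub_distrib, hsum, sum_walsh_mul_chi, if_pos hx, sub_self]
    intro γ
    have := (sum_eq_zero_iff_of_nonneg fun γ _ => sub_nonneg.2 (hle γ)).1 h0 γ (mem_univ _)
    linarith
  intro x hx y hy z hz
  have hxyz γ : walsh S γ * chi γ (x + y + z) = |walsh S γ| := by
    rcases eq_or_ne (walsh S γ) 0 with h0 | h0
    · simp [h0]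
    have hxy : chi γ x = chi γ y :=
      mul_left_cancel₀ h0 ((hsign x hx γ).trans (hsign y hy γ).symm)
    rw [chi_add_right, chi_add_right, hxy, chi_mul_self, one_mul, hsign z hz]
  have := sum_walsh_mul_chi (S := S) (x + y + z)
  rw [sum_congr rfl fun γ _ => hxyz γ, hsum] at this
  by_contra hxyz
  rw [if_neg hxyz] at this
  exact two_ne_zero (pow_eq_zero_iff'.1 this).1

/-- The hypotheses of the main lemma, for the support `S` of `f` and `walsh S = 2 ^ n • f̂`. -/
structure TwoLevelSpectrum (d : ℕ) (S : Finset (Cube n)) : Prop where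
  card_eq : #S = 2 ^ (d + 1)
  walsh_eq : ∀ γ, γ ≠ 0 → walsh S γ = 0 ∨ walsh S γ = 2 ^ d ∨ walsh S γ = -2 ^ d

def freqSupport (S : Finset (Cube n)) : Finset (Cube n) := {γ | γ ≠ 0 ∧ walsh S γ ≠ 0}

/-- For `θ ∈ freqSupport S`, `side S θ x = -1` when `x` lies on the side of the hyperplane `θ`
holding fewer points of `S`. -/
def side (S : Finset (Cube n)) (θ x : Cube n) : ℤ := (walsh S θ).sign * chi θ x

def minoritySet (S : Finset (Cube n)) (θ : Cube n) : Finset (Cube n) :=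
  {x ∈ S | side S θ x = -1}

def minorityFreqs (S : Finset (Cube n)) (x : Cube n) : Finset (Cube n) :=
  {θ ∈ freqSupport S | side S θ x = -1}

def blockDir (S : Finset (Cube n)) (x : Cube n) : Submodule (ZMod 2) (Cube n) :=
  (minorityFreqs S x).sup fun θ => addStab (minoritySet S θ)

def block (S : Finset (Cube n)) (x : Cube n) : Finset (Cube n) := coset x (blockDir S x)

section Spectrum

variable {S : Finset (Cube n)}

theorem mem_freqSupport {γ : Cube n} : γ ∈ freqSupport S ↔ γ ≠ 0 ∧ walsh S γ ≠ 0 := by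
  simp [freqSupport]

theorem sum_eq_add_sum_freqSupport (g : Cube n → ℤ) (hg : ∀ γ, walsh S γ = 0 → g γ = 0) :
    ∑ γ, g γ = g 0 + ∑ γ ∈ freqSupport S, g γ := by
  rw [← add_sum_erase _ _ (mem_univ 0)]
  congr 1
  refine (sum_subset (fun γ hγ => ?_) fun γ hγ hA => hg γ ?_).symm
  · simp [(mem_freqSupport.1 hγ).1]
  · simpa [mem_freqSupport, (mem_erase.1 hγ).1] using hA

theorem sum_side_mul_side (θ θ' : Cube n) : ∑ x ∈ S, side S θ x * side S θ' x =
    (walsh S θ).sign * (walsh S θ').sign * walsh S (θ + θ') := by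
  simp only [side, walsh, mul_sum, chi_add_left]
  exact sum_congr rfl fun x _ => by ring

theorem mem_minoritySet_of_mem {x θ : Cube n} (hx : x ∈ S) (hθ : θ ∈ minorityFreqs S x) :
    x ∈ minoritySet S θ :=
  mem_filter.2 ⟨hx, (mem_filter.1 hθ).2⟩

theorem mem_minorityFreqs_of_mem {x θ : Cube n} (hθ : θ ∈ freqSupport S)
    (hx : x ∈ minoritySet S θ) : θ ∈ minorityFreqs S x :=
  mem_filter.2 ⟨hθ, (mem_filter.1 hx).2⟩

theorem filter_block_eq_subset (x : Cube n) : {y ∈ S | block S y = block S x} ⊆ block S x :=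
  fun _ hy => (mem_filter.1 hy).2 ▸ self_mem_coset

variable {d : ℕ} (hS : TwoLevelSpectrum d S)
include hS

theorem TwoLevelSpectrum.walsh_zero_eq : walsh S 0 = 2 ^ (d + 1) := by
  simp [hS.card_eq]

theorem TwoLevelSpectrum.two_pow_dvd_walsh (γ : Cube n) : 2 ^ d ∣ walsh S γ := by
  rcases eq_or_ne γ 0 with rfl | hγ
  · exact hS.walsh_zero_eq ▸ pow_dvd_pow 2 d.le_succ
  rcases hS.walsh_eq γ hγ with h | h | h <;> simp [h]

theorem TwoLevelSpectrum.abs_walsh {θ : Cube n} (hθ : θ ∈ freqSupport S) :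
    |walsh S θ| = 2 ^ d := by
  obtain ⟨h0, hW⟩ := mem_freqSupport.1 hθ
  rcases hS.walsh_eq θ h0 with h | h | h <;> simp_all

theorem TwoLevelSpectrum.sign_mul_two_pow {θ : Cube n} (hθ : θ ∈ freqSupport S) :
    (walsh S θ).sign * 2 ^ d = walsh S θ := by
  rw [← hS.abs_walsh hθ, Int.sign_mul_abs]

theorem TwoLevelSpectrum.sign_walsh_eq {θ : Cube n} (hθ : θ ∈ freqSupport S) :
    (walsh S θ).sign = 1 ∨ (walsh S θ).sign = -1 := by
  obtain ⟨h0, hW⟩ := mem_freqSupport.1 hθ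
  rcases hS.walsh_eq θ h0 with h | h | h <;> simp_all

theorem TwoLevelSpectrum.side_eq_one_or {θ : Cube n} (hθ : θ ∈ freqSupport S) (x : Cube n) :
    side S θ x = 1 ∨ side S θ x = -1 := by
  rcases hS.sign_walsh_eq hθ with h | h <;>
    rcases chi_eq_one_or_eq_neg_one θ x with h' | h' <;> simp [side, h, h']

theorem TwoLevelSpectrum.side_mul_side {θ : Cube n} (hθ : θ ∈ freqSupport S) (x y : Cube n) :
    side S θ x * side S θ y = chi θ (x + y) := by
  rw [chi_add_right]
  rcases hS.sign_walsh_eq hθ with h | h <;> simp [side, h]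

theorem TwoLevelSpectrum.sum_side {θ : Cube n} (hθ : θ ∈ freqSupport S) :
    ∑ x ∈ S, side S θ x = 2 ^ d := by
  simp only [side, ← mul_sum]
  exact (Int.sign_mul_self_eq_abs _).trans (hS.abs_walsh hθ)

theorem TwoLevelSpectrum.two_mul_card_minoritySet {θ : Cube n} (hθ : θ ∈ freqSupport S) :
    2 * #(minoritySet S θ) = 2 ^ d := by
  have h := sum_one_sub S (side S θ) (fun x _ => hS.side_eq_one_or hθ x)
  rw [sum_sub_distrib, hS.sum_side hθ, sum_const, hS.card_eq, nsmul_one, ← minoritySet] at h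
  have : (2 * #(minoritySet S θ) : ℤ) = 2 ^ d := by
    push_cast at h; rw [pow_succ] at h; linarith
  exact_mod_cast this

theorem TwoLevelSpectrum.four_mul_card_inter {θ θ' : Cube n} (hθ : θ ∈ freqSupport S)
    (hθ' : θ' ∈ freqSupport S) :
    4 * (#(minoritySet S θ ∩ minoritySet S θ') : ℤ) =
      (walsh S θ).sign * (walsh S θ').sign * walsh S (θ + θ') := by
  have h := sum_one_sub_mul S (side S θ) (fun x => 1 - side S θ' x)
    (fun x _ => hS.side_eq_one_or hθ x)
  rw [← minoritySet, sum_one_sub _ _ fun x _ => hS.side_eq_one_or hθ' x] at h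
  have hinter : minoritySet S θ ∩ minoritySet S θ' =
      {x ∈ minoritySet S θ | side S θ' x = -1} := by
    ext x; simp [minoritySet]; tauto
  simp only [sub_mul, mul_sub, one_mul, mul_one, sum_sub_distrib, sum_const, hS.card_eq,
    nsmul_one, hS.sum_side hθ, hS.sum_side hθ', sum_side_mul_side] at h
  rw [hinter]
  push_cast at h
  rw [pow_succ] at h
  linarith

theorem TwoLevelSpectrum.four_mul_card_inter_of_ne {θ θ' : Cube n} (hθ : θ ∈ freqSupport S)
    (hθ' : θ' ∈ freqSupport S) (hne : θ ≠ θ')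
    (hI : (minoritySet S θ ∩ minoritySet S θ').Nonempty) :
    4 * #(minoritySet S θ ∩ minoritySet S θ') = 2 ^ d := by
  have h := congrArg abs (hS.four_mul_card_inter hθ hθ')
  have hσ : θ + θ' ≠ 0 := fun h => hne (add_eq_zero_iff_eq.1 h)
  have hpos : 0 < #(minoritySet S θ ∩ minoritySet S θ') := hI.card_pos
  generalize #(minoritySet S θ ∩ minoritySet S θ') = c at h hpos ⊢
  rcases hS.sign_walsh_eq hθ with h1 | h1 <;> rcases hS.sign_walsh_eq hθ' with h2 | h2 <;>
    rcases hS.walsh_eq _ hσ with h3 | h3 | h3 <;> simp [h1, h2, h3, abs_mul] at h <;>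
    first | omega | exact_mod_cast h

theorem TwoLevelSpectrum.two_mul_walsh_minoritySet {θ : Cube n} (hθ : θ ∈ freqSupport S)
    (γ : Cube n) :
    2 * walsh (minoritySet S θ) γ = walsh S γ - (walsh S θ).sign * walsh S (θ + γ) := by
  rw [walsh, minoritySet,
    ← sum_one_sub_mul S (side S θ) (chi γ) fun x _ => hS.side_eq_one_or hθ x]
  simp only [sub_mul, one_mul, sum_sub_distrib, side, mul_assoc, ← chi_add_left, ← mul_sum]
  rfl

theorem TwoLevelSpectrum.minoritySet_eq_coset {θ x : Cube n} (hθ : θ ∈ freqSupport S)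
    (hx : x ∈ minoritySet S θ) :
    minoritySet S θ = coset x (addStab (minoritySet S θ)) := by
  refine eq_coset_addStab (add_add_mem_of_abs_walsh ⟨x, hx⟩ fun γ => ?_) hx
  have hdvd : 2 ^ d ∣ 2 * walsh (minoritySet S θ) γ := by
    rw [hS.two_mul_walsh_minoritySet hθ]
    exact dvd_sub (hS.two_pow_dvd_walsh γ) (dvd_mul_of_dvd_right (hS.two_pow_dvd_walsh _) _)
  have hcard : (2 * #(minoritySet S θ) : ℤ) = 2 ^ d := by
    exact_mod_cast hS.two_mul_card_minoritySet hθ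
  have hle : |2 * walsh (minoritySet S θ) γ| ≤ 2 ^ d := by
    rw [abs_mul, ← hcard, abs_two]
    exact mul_le_mul_of_nonneg_left (abs_walsh_le γ) two_pos.le
  rcases hle.lt_or_eq with hlt | heq
  · left; simpa using Int.eq_zero_of_abs_lt_dvd hdvd hlt
  · right; rw [abs_mul] at heq; simp at heq; linarith

theorem TwoLevelSpectrum.minoritySet_eq_coset_of_mem {θ x : Cube n} (hx : x ∈ S)
    (hθ : θ ∈ minorityFreqs S x) : minoritySet S θ = coset x (addStab (minoritySet S θ)) :=
  hS.minoritySet_eq_coset (mem_filter.1 hθ).1 (mem_minoritySet_of_mem hx hθ)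

theorem TwoLevelSpectrum.four_mul_card_inter_of_mem {θ θ' x : Cube n} (hx : x ∈ S)
    (hθ : θ ∈ minorityFreqs S x) (hθ' : θ' ∈ minorityFreqs S x) (hne : θ ≠ θ') :
    4 * #(minoritySet S θ ∩ minoritySet S θ') = 2 ^ d :=
  hS.four_mul_card_inter_of_ne (mem_filter.1 hθ).1 (mem_filter.1 hθ').1 hne
    ⟨x, mem_inter.2 ⟨mem_minoritySet_of_mem hx hθ, mem_minoritySet_of_mem hx hθ'⟩⟩

theorem TwoLevelSpectrum.finrank_addStab_minoritySet {θ x : Cube n} (hx : x ∈ S)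
    (hθ : θ ∈ minorityFreqs S x) :
    Module.finrank (ZMod 2) (addStab (minoritySet S θ)) + 1 = d := by
  have h := hS.two_mul_card_minoritySet (mem_filter.1 hθ).1
  rw [hS.minoritySet_eq_coset_of_mem hx hθ, card_coset, ← pow_succ'] at h
  exact Nat.pow_right_injective le_rfl h

theorem TwoLevelSpectrum.finrank_inf_addStab {θ θ' x : Cube n} (hx : x ∈ S)
    (hθ : θ ∈ minorityFreqs S x) (hθ' : θ' ∈ minorityFreqs S x) (hne : θ ≠ θ') :
    Module.finrank (ZMod 2) ↥(addStab (minoritySet S θ) ⊓ addStab (minoritySet S θ')) + 2 = d := by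
  have h := hS.four_mul_card_inter_of_mem hx hθ hθ' hne
  rw [hS.minoritySet_eq_coset_of_mem hx hθ, hS.minoritySet_eq_coset_of_mem hx hθ', ← coset_inf,
    card_coset, show 4 = 2 ^ 2 by rfl, ← pow_add, add_comm] at h
  exact Nat.pow_right_injective le_rfl h

end Spectrum

section Blocks

variable {k d : ℕ} {S : Finset (Cube (k + d))} (hS : TwoLevelSpectrum d S)
include hS

theorem TwoLevelSpectrum.card_freqSupport : #(freqSupport S) + 4 = 2 ^ (k + 1) := by
  have h := sum_walsh_sq (S := S)
  rw [sum_eq_add_sum_freqSupport (S := S) _ fun γ h => by simp [h], hS.walsh_zero_eq,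
    sum_congr rfl fun θ hθ => by rw [← sq_abs, hS.abs_walsh hθ], sum_const, hS.card_eq,
    nsmul_eq_mul] at h
  have : ((#(freqSupport S) + 4 : ℕ) : ℤ) * 2 ^ (2 * d) = 2 ^ (k + 1) * 2 ^ (2 * d) := by
    push_cast at h ⊢; linear_combination h
  exact_mod_cast mul_right_cancel₀ (by positivity) this

theorem TwoLevelSpectrum.sum_side_freqSupport {x : Cube (k + d)} (hx : x ∈ S) :
    ∑ θ ∈ freqSupport S, side S θ x + 2 = 2 ^ k := by
  have h := sum_walsh_mul_chi (S := S) x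
  rw [sum_eq_add_sum_freqSupport (S := S) _ fun γ h => by simp [h], hS.walsh_zero_eq, if_pos hx,
    chi_zero_left, sum_congr rfl fun θ hθ => by rw [← hS.sign_mul_two_pow hθ]] at h
  have : 2 ^ d * (∑ θ ∈ freqSupport S, side S θ x + 2) = 2 ^ d * 2 ^ k := by
    simp only [side, mul_add, mul_sum]; rw [← pow_add, add_comm d, ← h]; ring_nf
  exact mul_left_cancel₀ (by positivity) this

theorem TwoLevelSpectrum.two_mul_card_minorityFreqs {x : Cube (k + d)} (hx : x ∈ S) :
    2 * #(minorityFreqs S x) + 2 = 2 ^ k := by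
  have h := sum_one_sub _ _ fun θ hθ => hS.side_eq_one_or hθ x
  rw [sum_sub_distrib, sum_const, nsmul_one, ← minorityFreqs] at h
  have h1 : ((#(freqSupport S) + 4 : ℕ) : ℤ) = 2 ^ (k + 1) := by
    exact_mod_cast hS.card_freqSupport
  have h2 := hS.sum_side_freqSupport hx
  have : (2 * #(minorityFreqs S x) + 2 : ℤ) = 2 ^ k := by
    push_cast at h1; rw [pow_succ] at h1; linarith
  exact_mod_cast this

theorem TwoLevelSpectrum.four_mul_card_inter_minorityFreqs {y z : Cube (k + d)} (hy : y ∈ S)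
    (hz : z ∈ S) :
    4 * (#(minorityFreqs S y ∩ minorityFreqs S z) : ℤ) = walsh (freqSupport S) (y + z) := by
  have h := sum_one_sub_mul _ _ (fun θ => 1 - side S θ z) fun θ hθ => hS.side_eq_one_or hθ y
  rw [← minorityFreqs, sum_one_sub (minorityFreqs S y) (side S · z)
    fun θ hθ => hS.side_eq_one_or (mem_filter.1 hθ).1 z] at h
  have hinter : minorityFreqs S y ∩ minorityFreqs S z =
      {θ ∈ minorityFreqs S y | side S θ z = -1} := by
    ext θ; simp [minorityFreqs]; tauto
  simp only [sub_mul, mul_sub, one_mul, mul_one, sum_sub_distrib, sum_const, nsmul_one] at h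
  rw [sum_congr rfl fun θ hθ => hS.side_mul_side hθ y z] at h
  have h1 : ((#(freqSupport S) + 4 : ℕ) : ℤ) = 2 ^ (k + 1) := by
    exact_mod_cast hS.card_freqSupport
  have h2 := hS.sum_side_freqSupport hy
  have h3 := hS.sum_side_freqSupport hz
  rw [hinter, walsh]
  simp only [chi_comm (y + z)]
  push_cast at h h1
  rw [pow_succ] at h1
  linarith

theorem TwoLevelSpectrum.two_pow_mul_card_filter_add_mem (w : Cube (k + d)) :
    2 ^ k * (#{x ∈ S | x + w ∈ S} : ℤ) = 2 ^ d * (walsh (freqSupport S) w + 4) := by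
  have h := sum_walsh_sq_mul_chi (S := S) w
  rw [sum_eq_add_sum_freqSupport (S := S) _ fun γ h => by simp [h], hS.walsh_zero_eq,
    chi_zero_left, sum_congr rfl fun θ hθ => by rw [← sq_abs, hS.abs_walsh hθ], ← mul_sum] at h
  have : 2 ^ d * (2 ^ k * (#{x ∈ S | x + w ∈ S} : ℤ)) =
      2 ^ d * (2 ^ d * (walsh (freqSupport S) w + 4)) := by
    simp only [walsh, chi_comm w]; linear_combination -h
  exact mul_left_cancel₀ (by positivity) this

theorem TwoLevelSpectrum.card_filter_add_mem_minoritySet {β : Cube (k + d)}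
    (hβ : β ∈ freqSupport S) (w : Cube (k + d)) :
    #{x ∈ minoritySet S β | x + w ∈ minoritySet S β} =
      if w ∈ addStab (minoritySet S β) then #(minoritySet S β) else 0 := by
  split_ifs with hw
  · exact congrArg card (filter_true_of_mem fun x hx => hw x hx)
  · refine card_eq_zero.2 (filter_eq_empty_iff.2 fun x hx hxw => hw ?_)
    rwa [hS.minoritySet_eq_coset hβ hx, mem_coset, add_add_cancel_left] at hxw

theorem TwoLevelSpectrum.two_pow_mul_card_filter_mem_addStab (w : Cube (k + d)) :
    2 ^ (k + 1) * (#{β ∈ freqSupport S | w ∈ addStab (minoritySet S β)} : ℤ) =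
      walsh (freqSupport S) w * (walsh (freqSupport S) w + 4) := by
  set R := walsh (freqSupport S) w
  set P : Finset (Cube (k + d)) := {x ∈ S | x + w ∈ S}
  have hcount : ∑ β ∈ freqSupport S, #{x ∈ minoritySet S β | x + w ∈ minoritySet S β} =
      ∑ x ∈ P, #(minorityFreqs S x ∩ minorityFreqs S (x + w)) := by
    convert sum_card_bipartiteAbove_eq_sum_card_bipartiteBelow
      (fun β x => x ∈ minoritySet S β ∧ x + w ∈ minoritySet S β) using 3 with β _ x hx
    · ext x; simp [bipartiteAbove, P, minoritySet]; tauto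
    · ext β
      simp [bipartiteBelow, minorityFreqs, minoritySet, (mem_filter.1 hx).1, (mem_filter.1 hx).2]
      tauto
  have hleft : 2 * ∑ β ∈ freqSupport S, #{x ∈ minoritySet S β | x + w ∈ minoritySet S β} =
      2 ^ d * #{β ∈ freqSupport S | w ∈ addStab (minoritySet S β)} := by
    rw [sum_congr rfl fun β hβ => hS.card_filter_add_mem_minoritySet hβ w, ← sum_filter, mul_sum,
      sum_congr rfl fun β hβ => hS.two_mul_card_minoritySet (mem_filter.1 hβ).1, sum_const,
      smul_eq_mul, mul_comm]
  have hright : 4 * ∑ x ∈ P, (#(minorityFreqs S x ∩ minorityFreqs S (x + w)) : ℤ) = #P * R := by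
    rw [mul_sum, sum_congr rfl fun x hx => ?_, sum_const, nsmul_eq_mul]
    rw [hS.four_mul_card_inter_minorityFreqs (mem_filter.1 hx).1 (mem_filter.1 hx).2,
      add_add_cancel_left]
  have hP := hS.two_pow_mul_card_filter_add_mem w
  have hleft' := congrArg (Nat.cast (R := ℤ)) hleft
  have hcount' := congrArg (Nat.cast (R := ℤ)) hcount
  push_cast at hleft' hcount'
  have : 2 ^ d * (2 ^ (k + 1) * (#{β ∈ freqSupport S | w ∈ addStab (minoritySet S β)} : ℤ)) =
      2 ^ d * (R * (R + 4)) := by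
    linear_combination (-2 ^ (k + 1)) * hleft' + 2 ^ (k + 2) * hcount' + 2 ^ k * hright + R * hP
  exact mul_left_cancel₀ (by positivity) this

theorem TwoLevelSpectrum.card_inter_minorityFreqs_ne_one (hk : 5 ≤ k) {y z : Cube (k + d)}
    (hy : y ∈ S) (hz : z ∈ S) : #(minorityFreqs S y ∩ minorityFreqs S z) ≠ 1 := by
  intro h1
  have h := hS.two_pow_mul_card_filter_mem_addStab (y + z)
  rw [← hS.four_mul_card_inter_minorityFreqs hy hz, h1] at h
  have h64 : (2 : ℤ) ^ 6 ≤ 2 ^ (k + 1) := pow_le_pow_right₀ one_le_two (by omega)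
  rcases Nat.eq_zero_or_pos #{β ∈ freqSupport S | y + z ∈ addStab (minoritySet S β)} with h0 | h0
  · rw [h0] at h; norm_num at h
  · have : (1 : ℤ) ≤ #{β ∈ freqSupport S | y + z ∈ addStab (minoritySet S β)} := by
      exact_mod_cast h0
    norm_num at h h64
    nlinarith

theorem TwoLevelSpectrum.exists_ne_mem_minorityFreqs (hk : 3 ≤ k) {x : Cube (k + d)}
    (hx : x ∈ S) : ∃ θ ∈ minorityFreqs S x, ∃ θ' ∈ minorityFreqs S x, θ ≠ θ' := by
  have h := hS.two_mul_card_minorityFreqs hx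
  have : 2 ^ 3 ≤ 2 ^ k := Nat.pow_le_pow_right two_pos hk
  exact one_lt_card.1 (by omega)

/-- The `2 ^ (k - 1) - 1 ≥ 15` minority sets through `x` have size `2 ^ (d - 1)` and meet
pairwise in `2 ^ (d - 2)` points, so they cannot all share one core: `S` is too small. -/
theorem TwoLevelSpectrum.not_forall_inf_addStab_le (hk : 5 ≤ k) {x θ θ' : Cube (k + d)}
    (hx : x ∈ S) (hθ : θ ∈ minorityFreqs S x) (hθ' : θ' ∈ minorityFreqs S x) (hne : θ ≠ θ') :
    ¬ ∀ a ∈ minorityFreqs S x, ∀ b ∈ minorityFreqs S x, a ≠ b → ∀ c ∈ minorityFreqs S x,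
      addStab (minoritySet S a) ⊓ addStab (minoritySet S b) ≤ addStab (minoritySet S c) := by
  intro hsun
  have hC : ∀ η ∈ minorityFreqs S x, minoritySet S η = coset x (addStab (minoritySet S η)) :=
    fun η hη => hS.minoritySet_eq_coset_of_mem hx hη
  have hcount := card_add_sum_card_sub_le (I := minorityFreqs S x) (F := minoritySet S) (S := S)
    (Z := minoritySet S θ ∩ minoritySet S θ') (inter_subset_left.trans (filter_subset _ _))
    (fun η hη => by
      rw [hC θ hθ, hC θ' hθ', ← coset_inf, hC η hη]
      exact coset_mono (hsun θ hθ θ' hθ' hne η hη))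
    (fun η _ => filter_subset _ _)
    (fun a ha b hb hab => by
      rw [hC a ha, hC b hb, ← coset_inf, hC θ hθ, hC θ' hθ', ← coset_inf]
      exact coset_mono (le_inf (hsun a ha b hb hab θ hθ) (hsun a ha b hb hab θ' hθ')))
  have hZ := hS.four_mul_card_inter_of_mem hx hθ hθ' hne
  rw [sum_congr rfl fun η hη => show #(minoritySet S η) - #(minoritySet S θ ∩ minoritySet S θ') =
      #(minoritySet S θ ∩ minoritySet S θ') by
    have := hS.two_mul_card_minoritySet (mem_filter.1 hη).1; omega, sum_const, smul_eq_mul,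
    hS.card_eq, pow_succ] at hcount
  have hD := hS.two_mul_card_minorityFreqs hx
  have : 2 ^ 5 ≤ 2 ^ k := Nat.pow_le_pow_right two_pos hk
  have : #(minorityFreqs S x) * #(minoritySet S θ ∩ minoritySet S θ') ≤
      7 * #(minoritySet S θ ∩ minoritySet S θ') := by omega
  have := le_of_mul_le_mul_right this (by have := Nat.two_pow_pos d; omega)
  omega

theorem TwoLevelSpectrum.blockDir_eq_sup (hk : 5 ≤ k) {x θ θ' : Cube (k + d)} (hx : x ∈ S)
    (hθ : θ ∈ minorityFreqs S x) (hθ' : θ' ∈ minorityFreqs S x) (hne : θ ≠ θ') :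
    blockDir S x = addStab (minoritySet S θ) ⊔ addStab (minoritySet S θ') := by
  have hd := hS.finrank_inf_addStab hx hθ hθ' hne
  have hle := (forall_le_sup_or_forall_inf_le (K := ZMod 2) (m := d - 2)
    (V := fun η => addStab (minoritySet S η))
    (fun a ha => by have := hS.finrank_addStab_minoritySet hx ha; omega)
    (fun a ha b hb hab => by have := hS.finrank_inf_addStab hx ha hb hab; omega)
    hθ hθ' hne).resolve_right (hS.not_forall_inf_addStab_le hk hx hθ hθ' hne)
  exact le_antisymm (Finset.sup_le hle)
    (sup_le (le_sup (f := fun η => addStab (minoritySet S η)) hθ)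
      (le_sup (f := fun η => addStab (minoritySet S η)) hθ'))

theorem TwoLevelSpectrum.finrank_blockDir (hk : 5 ≤ k) {x : Cube (k + d)} (hx : x ∈ S) :
    Module.finrank (ZMod 2) (blockDir S x) = d := by
  obtain ⟨θ, hθ, θ', hθ', hne⟩ := hS.exists_ne_mem_minorityFreqs (by omega) hx
  have := hS.finrank_addStab_minoritySet hx hθ
  have := hS.finrank_addStab_minoritySet hx hθ'
  have := hS.finrank_inf_addStab hx hθ hθ' hne
  rw [hS.blockDir_eq_sup hk hx hθ hθ' hne,
    finrank_sup_eq_add_two (m := d - 2) (by omega) (by omega) (by omega)]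
  omega

theorem TwoLevelSpectrum.card_block (hk : 5 ≤ k) {x : Cube (k + d)} (hx : x ∈ S) :
    #(block S x) = 2 ^ d := by
  rw [block, card_coset, hS.finrank_blockDir hk hx]

theorem TwoLevelSpectrum.block_eq_of_mem_inter (hk : 5 ≤ k) {y z θ : Cube (k + d)}
    (hy : y ∈ S) (hz : z ∈ S) (hθ : θ ∈ minorityFreqs S y ∩ minorityFreqs S z) :
    block S y = block S z := by
  have h1 := hS.card_inter_minorityFreqs_ne_one hk hy hz
  have h0 := card_pos.2 ⟨θ, hθ⟩
  obtain ⟨a, ha, b, hb, hab⟩ :=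
    one_lt_card.1 (show 1 < #(minorityFreqs S y ∩ minorityFreqs S z) by omega)
  rw [mem_inter] at ha hb
  have hdir : blockDir S y = blockDir S z := by
    rw [hS.blockDir_eq_sup hk hy ha.1 hb.1 hab, hS.blockDir_eq_sup hk hz ha.2 hb.2 hab]
  have hyz : y + z ∈ blockDir S y := by
    have hz' := mem_minoritySet_of_mem hz ha.2
    rw [hS.minoritySet_eq_coset_of_mem hy ha.1, mem_coset] at hz'
    exact le_sup (f := fun η => addStab (minoritySet S η)) ha.1 hz'
  rw [block, block, ← hdir]
  exact coset_eq_coset hyz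

theorem TwoLevelSpectrum.three_mul_two_pow_le_card_filter_block_eq (hk : 5 ≤ k)
    {x : Cube (k + d)} (hx : x ∈ S) : 3 * 2 ^ d ≤ 4 * #{y ∈ S | block S y = block S x} := by
  obtain ⟨θ, hθ, θ', hθ', hne⟩ := hS.exists_ne_mem_minorityFreqs (by omega) hx
  have hsub : minoritySet S θ ∪ minoritySet S θ' ⊆ {y ∈ S | block S y = block S x} := by
    intro y hy
    rcases mem_union.1 hy with h | h <;> refine mem_filter.2 ⟨(mem_filter.1 h).1, ?_⟩
    · exact hS.block_eq_of_mem_inter hk (mem_filter.1 h).1 hx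
        (mem_inter.2 ⟨mem_minorityFreqs_of_mem (mem_filter.1 hθ).1 h, hθ⟩)
    · exact hS.block_eq_of_mem_inter hk (mem_filter.1 h).1 hx
        (mem_inter.2 ⟨mem_minorityFreqs_of_mem (mem_filter.1 hθ').1 h, hθ'⟩)
  have := card_union_add_card_inter (minoritySet S θ) (minoritySet S θ')
  have := card_le_card hsub
  have := hS.two_mul_card_minoritySet (mem_filter.1 hθ).1
  have := hS.two_mul_card_minoritySet (mem_filter.1 hθ').1
  have := hS.four_mul_card_inter_of_mem hx hθ hθ' hne
  omega

theorem TwoLevelSpectrum.exists_two_blocks (hk : 5 ≤ k) :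
    ∃ x₁ ∈ S, ∃ x₂ ∈ S, Disjoint (block S x₁) (block S x₂) ∧ S = block S x₁ ∪ block S x₂ := by
  obtain ⟨x₁, hx₁, x₂, hx₂, hne, hS12, h₁, h₂⟩ := exists_two_fibers (block S) (Nat.two_pow_pos d)
    (by rw [hS.card_eq, pow_succ, mul_comm])
    (fun x hx => hS.three_mul_two_pow_le_card_filter_block_eq hk hx)
    (fun x hx => hS.card_block hk hx ▸ card_le_card (filter_block_eq_subset x))
  have hblock : ∀ x ∈ S, #{y ∈ S | block S y = block S x} = 2 ^ d →
      {y ∈ S | block S y = block S x} = block S x := fun x hx h =>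
    eq_of_subset_of_card_le (filter_block_eq_subset x) (by rw [hS.card_block hk hx, h])
  refine ⟨x₁, hx₁, x₂, hx₂, ?_⟩
  rw [← hblock x₁ hx₁ h₁, ← hblock x₂ hx₂ h₂]
  exact ⟨disjoint_filter.2 fun _ _ h h' => hne (h.symm.trans h'), hS12⟩

end Blocks

theorem fc_eq_walsh {f : Cube n → ℝ} (hf : ∀ x, f x = 0 ∨ f x = 1) (α : Cube n) :
    fc f α = walsh {x | f x = 1} α / 2 ^ n := by
  rw [fc, walsh, sum_filter]
  push_cast
  congr 1
  refine sum_congr rfl fun x _ => ?_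
  rcases hf x with h | h <;> simp [h, chi, dotProduct]

theorem walsh_eq_of_fc_eq {k d : ℕ} (hn : k + d = n) {f : Cube n → ℝ}
    (hf : ∀ x, f x = 0 ∨ f x = 1) {α : Cube n} {c : ℤ} (h : fc f α = c / 2 ^ k) :
    walsh {x | f x = 1} α = c * 2 ^ d := by
  rw [fc_eq_walsh hf, div_eq_div_iff (by positivity) (by positivity),
    show (2 : ℝ) ^ n = 2 ^ k * 2 ^ d by rw [← hn, pow_add]] at h
  have : (walsh {x | f x = 1} α : ℝ) = c * 2 ^ d :=
    mul_right_cancel₀ (pow_ne_zero k two_ne_zero) (by linear_combination h)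
  exact_mod_cast this

theorem TwoLevelSpectrum.of_fc {k d : ℕ} (hk : 1 ≤ k) {f : Cube (k + d) → ℝ}
    (hf : ∀ x, f x = 0 ∨ f x = 1) (h0 : fc f 0 = 1 / 2 ^ (k - 1))
    (h : ∀ α, α ≠ 0 → fc f α = 0 ∨ fc f α = 1 / 2 ^ k ∨ fc f α = -(1 / 2 ^ k)) :
    TwoLevelSpectrum d {x | f x = 1} := by
  refine ⟨?_, fun γ hγ => ?_⟩
  · have := walsh_eq_of_fc_eq (by omega : k - 1 + (d + 1) = k + d) hf (c := 1)
      (by simpa using h0)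
    rw [walsh_zero, one_mul] at this
    exact_mod_cast this
  rcases h γ hγ with h1 | h1 | h1
  · exact Or.inl (by simpa using walsh_eq_of_fc_eq rfl hf (c := 0) (by simpa using h1))
  · exact Or.inr (Or.inl (by simpa using walsh_eq_of_fc_eq rfl hf (c := 1) (by simpa using h1)))
  · exact Or.inr (Or.inr (by
      simpa using walsh_eq_of_fc_eq rfl hf (c := -1) (by simp [h1, neg_div])))

end

end TwoCosets

open TwoCosets in
/-- Main Lemma. -/
theorem stmt_11 {n k : ℕ} (hk : 5 ≤ k) (hn : k ≤ n) (f : (Fin n → ZMod 2) → ℝ)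
    (hf : ∀ x, f x = 0 ∨ f x = 1)
    (h0 : fc f 0 = 1 / 2 ^ (k - 1))
    (h : ∀ α : Fin n → ZMod 2, α ≠ 0 →
      fc f α = 0 ∨ fc f α = 1 / 2 ^ k ∨ fc f α = -(1 / 2 ^ k)) :
    ∃ (a b : Fin n → ZMod 2) (V W : Submodule (ZMod 2) (Fin n → ZMod 2)),
      Module.finrank (ZMod 2) V = n - k ∧ Module.finrank (ZMod 2) W = n - k ∧
      Disjoint ((a + ·) '' (V : Set (Fin n → ZMod 2)))
        ((b + ·) '' (W : Set (Fin n → ZMod 2))) ∧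
      {x | f x = 1} =
        (a + ·) '' (V : Set (Fin n → ZMod 2)) ∪ (b + ·) '' (W : Set (Fin n → ZMod 2)) := by
  classical
  obtain ⟨d, rfl⟩ : ∃ d, n = k + d := ⟨n - k, by omega⟩
  have hS := TwoLevelSpectrum.of_fc (by omega) hf h0 h
  obtain ⟨x₁, hx₁, x₂, hx₂, hdisj, hunion⟩ := hS.exists_two_blocks hk
  refine ⟨x₁, x₂, blockDir _ x₁, blockDir _ x₂, by rw [hS.finrank_blockDir hk hx₁]; omega,
    by rw [hS.finrank_blockDir hk hx₂]; omega, ?_, ?_⟩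
  · rw [← coe_coset, ← coe_coset]
    exact disjoint_coe.2 hdisj
  · rw [← coe_coset, ← coe_coset, ← block, ← block, ← coe_union, ← hunion]
    ext; simp
end

section
/- Define f : F_2^6 → {0,1} by f(x) = 1 if and only if the Hamming weight of x is 0, 5, or 6. Then f̂(0) = 1/8, f̂(β) = −1/16 for β of weight 1 or weight 6, f̂(α) = 1/16 for α of weight 2 or weight 5, and f̂(γ) = 0 for all other γ. Moreover the support of f is a disjoint union of four affine subspaces of dimension 1, but is not the union of two disjoint affine subspaces of dimension 2. -/
/-!
The Fourier coefficients are a finite computation: `f̂(γ)` is `1/64` times the character sum of `γ`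
over the eight-point support. The support is `{0, 𝟙}` together with the six vectors of weight 5;
these pair up into the four lines `{0, 𝟙}` and `{𝟙 + eᵢ, 𝟙 + eⱼ}` for `{i, j} = {0, 1}, {2, 3}, {4, 5}`.
If the support were the union of two planes, the one through `0` would be a linear plane inside the
support. But two distinct nonzero support vectors have weight at least 5, so their sum has weight at
most 2 and is nonzero, hence lies outside the support.
-/

open Finset

/-- The Hamming weight of a vector in F_2^n. -/
def wt {n : ℕ} (x : Fin n → ZMod 2) : ℕ := (Finset.univ.filter (fun i => x i = 1)).card

lemma wt_le {n : ℕ} (x : Fin n → ZMod 2) : wt x ≤ n := by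
  simpa [wt] using card_filter_le (univ : Finset (Fin n)) (fun i => x i = 1)

def charSum {n : ℕ} (P : (Fin n → ZMod 2) → Prop) [DecidablePred P] (γ : Fin n → ZMod 2) : ℤ :=
  ∑ x, if P x then (-1) ^ (∑ i, γ i * x i : ZMod 2).val else 0

lemma fc_eq_charSum {n : ℕ} (P : (Fin n → ZMod 2) → Prop) [DecidablePred P]
    (f : (Fin n → ZMod 2) → ℝ) (hf : ∀ x, f x = if P x then 1 else 0) (γ : Fin n → ZMod 2) :
    fc f γ = charSum P γ / 2 ^ n := by
  unfold fc charSum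
  push_cast
  congr 1
  refine sum_congr rfl fun x _ => ?_
  rw [hf x]
  split_ifs <;> simp

lemma setOf_eq_one_of_eq_ite {α : Type*} (P : α → Prop) [DecidablePred P] (f : α → ℝ)
    (hf : ∀ x, f x = if P x then 1 else 0) : {x | f x = 1} = {x | P x} := by
  ext x
  simp [hf x]

lemma image_add_left_eq_of_zero_mem {R M : Type*} [Ring R] [AddCommGroup M] [Module R M]
    (V : Submodule R M) {a : M} (h : (0 : M) ∈ (a + ·) '' (V : Set M)) :
    (a + ·) '' (V : Set M) = V := by
  obtain ⟨v, hv, hav⟩ := h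
  have ha : a ∈ V := by
    rw [eq_neg_of_add_eq_zero_left hav]
    exact V.neg_mem hv
  ext y
  rw [Set.image_add_left, Set.mem_preimage, SetLike.mem_coe, SetLike.mem_coe,
    V.add_mem_iff_right (V.neg_mem ha)]

lemma exists_ne_zero_ne_of_one_lt_finrank {K M : Type*} [DivisionRing K] [AddCommGroup M]
    [Module K M] (V : Submodule K M) (hV : 1 < Module.finrank K V) :
    ∃ u ∈ V, ∃ w ∈ V, u ≠ 0 ∧ w ≠ 0 ∧ u ≠ w := by
  have : Module.Finite K V := Module.finite_of_finrank_pos (by omega)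
  let b := Module.finBasis K V
  refine ⟨b ⟨0, by omega⟩, (b _).2, b ⟨1, hV⟩, (b _).2, ?_, ?_, ?_⟩
  · exact_mod_cast b.ne_zero _
  · exact_mod_cast b.ne_zero _
  · exact fun h => absurd (b.injective (Subtype.coe_injective h)) (by simp)

lemma coe_span_singleton_zmod_two {M : Type*} [AddCommGroup M] [Module (ZMod 2) M] (v : M) :
    (Submodule.span (ZMod 2) {v} : Set M) = {0, v} := by
  ext x
  simp only [SetLike.mem_coe, Submodule.mem_span_singleton, Set.mem_insert_iff,
    Set.mem_singleton_iff]
  constructor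
  · rintro ⟨c, rfl⟩
    fin_cases c
    exacts [Or.inl (zero_smul _ v), Or.inr (one_smul _ v)]
  · rintro (rfl | rfl)
    exacts [⟨0, zero_smul _ _⟩, ⟨1, one_smul _ _⟩]

lemma image_add_left_span_singleton_zmod_two {M : Type*} [AddCommGroup M] [Module (ZMod 2) M]
    (a v : M) : (a + ·) '' (Submodule.span (ZMod 2) {v} : Set M) = {a, a + v} := by
  rw [coe_span_singleton_zmod_two, Set.image_pair, add_zero]

abbrev InSupport (x : Fin 6 → ZMod 2) : Prop := wt x = 0 ∨ wt x = 5 ∨ wt x = 6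

set_option maxRecDepth 100000 in
lemma charSum_zero : charSum InSupport 0 = 8 := by decide

set_option maxRecDepth 100000 in
lemma charSum_of_wt_one_or_six :
    ∀ γ : Fin 6 → ZMod 2, wt γ = 1 ∨ wt γ = 6 → charSum InSupport γ = -4 := by decide

set_option maxRecDepth 100000 in
lemma charSum_of_wt_two_or_five :
    ∀ γ : Fin 6 → ZMod 2, wt γ = 2 ∨ wt γ = 5 → charSum InSupport γ = 4 := by decide

set_option maxRecDepth 100000 in
lemma charSum_of_wt_three_or_four :
    ∀ γ : Fin 6 → ZMod 2, wt γ = 3 ∨ wt γ = 4 → charSum InSupport γ = 0 := by decide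

set_option maxRecDepth 100000 in
lemma eq_zero_or_eq_zero_or_eq_of_inSupport : ∀ u w : Fin 6 → ZMod 2,
    InSupport u → InSupport w → InSupport (u + w) → u = 0 ∨ w = 0 ∨ u = w := by decide

lemma not_subset_inSupport_of_one_lt_finrank (V : Submodule (ZMod 2) (Fin 6 → ZMod 2))
    (hV : 1 < Module.finrank (ZMod 2) V) : ¬ (V : Set (Fin 6 → ZMod 2)) ⊆ {x | InSupport x} := by
  intro hsub
  obtain ⟨u, hu, w, hw, hu0, hw0, huw⟩ := exists_ne_zero_ne_of_one_lt_finrank V hV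
  rcases eq_zero_or_eq_zero_or_eq_of_inSupport u w (hsub hu) (hsub hw) (hsub (V.add_mem hu hw))
    with h | h | h
  exacts [hu0 h, hw0 h, huw h]

lemma not_image_add_left_subset_inSupport (V : Submodule (ZMod 2) (Fin 6 → ZMod 2))
    (hV : 1 < Module.finrank (ZMod 2) V) {a : Fin 6 → ZMod 2}
    (h0 : (0 : Fin 6 → ZMod 2) ∈ (a + ·) '' (V : Set (Fin 6 → ZMod 2))) :
    ¬ (a + ·) '' (V : Set (Fin 6 → ZMod 2)) ⊆ {x | InSupport x} := by
  rw [image_add_left_eq_of_zero_mem V h0]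
  exact not_subset_inSupport_of_one_lt_finrank V hV

def lineBase : Fin 4 → Fin 6 → ZMod 2 :=
  ![0, ![0, 1, 1, 1, 1, 1], ![1, 1, 0, 1, 1, 1], ![1, 1, 1, 1, 0, 1]]

def lineDir : Fin 4 → Fin 6 → ZMod 2 :=
  ![![1, 1, 1, 1, 1, 1], ![1, 1, 0, 0, 0, 0], ![0, 0, 1, 1, 0, 0], ![0, 0, 0, 0, 1, 1]]

lemma lineDir_ne_zero : ∀ i, lineDir i ≠ 0 := by decide

set_option maxRecDepth 100000 in
lemma lines_disjoint : ∀ i j, i ≠ j → ∀ x : Fin 6 → ZMod 2,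
    x = lineBase i ∨ x = lineBase i + lineDir i → x ≠ lineBase j ∧ x ≠ lineBase j + lineDir j := by
  decide

set_option maxRecDepth 100000 in
lemma inSupport_iff_mem_line : ∀ x : Fin 6 → ZMod 2,
    InSupport x ↔ ∃ i, x = lineBase i ∨ x = lineBase i + lineDir i := by decide

/-- The counterexample for k = 4. -/
theorem stmt_14 (f : (Fin 6 → ZMod 2) → ℝ)
    (hf : ∀ x, f x = if wt x = 0 ∨ wt x = 5 ∨ wt x = 6 then (1 : ℝ) else 0) :
    fc f 0 = 1 / 8 ∧
    (∀ β : Fin 6 → ZMod 2, wt β = 1 ∨ wt β = 6 → fc f β = -(1 / 16)) ∧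
    (∀ α : Fin 6 → ZMod 2, wt α = 2 ∨ wt α = 5 → fc f α = 1 / 16) ∧
    (∀ γ : Fin 6 → ZMod 2, wt γ ∉ ({0, 1, 2, 5, 6} : Set ℕ) → fc f γ = 0) ∧
    (∃ (a : Fin 4 → (Fin 6 → ZMod 2)) (V : Fin 4 → Submodule (ZMod 2) (Fin 6 → ZMod 2)),
      (∀ i, Module.finrank (ZMod 2) (V i) = 1) ∧
      (Pairwise fun i j =>
        Disjoint ((a i + ·) '' (V i : Set (Fin 6 → ZMod 2)))
          ((a j + ·) '' (V j : Set (Fin 6 → ZMod 2)))) ∧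
      {x | f x = 1} = ⋃ i, (a i + ·) '' (V i : Set (Fin 6 → ZMod 2))) ∧
    ¬ ∃ (a b : Fin 6 → ZMod 2) (V W : Submodule (ZMod 2) (Fin 6 → ZMod 2)),
        Module.finrank (ZMod 2) V = 2 ∧ Module.finrank (ZMod 2) W = 2 ∧
        Disjoint ((a + ·) '' (V : Set (Fin 6 → ZMod 2)))
          ((b + ·) '' (W : Set (Fin 6 → ZMod 2))) ∧
        {x | f x = 1} =
          (a + ·) '' (V : Set (Fin 6 → ZMod 2)) ∪ (b + ·) '' (W : Set (Fin 6 → ZMod 2)) := by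
  have hfc := fc_eq_charSum InSupport f hf
  have hsupp := setOf_eq_one_of_eq_ite InSupport f hf
  refine ⟨?_, fun β hβ => ?_, fun α hα => ?_, fun γ hγ => ?_, ?_, ?_⟩
  · rw [hfc, charSum_zero]; norm_num
  · rw [hfc, charSum_of_wt_one_or_six β hβ]; norm_num
  · rw [hfc, charSum_of_wt_two_or_five α hα]; norm_num
  · have hγ34 : wt γ = 3 ∨ wt γ = 4 := by
      simp only [Set.mem_insert_iff, Set.mem_singleton_iff, not_or] at hγ
      have := wt_le γ
      omega
    rw [hfc, charSum_of_wt_three_or_four γ hγ34]; norm_num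
  · refine ⟨lineBase, fun i => Submodule.span (ZMod 2) {lineDir i},
      fun i => finrank_span_singleton (lineDir_ne_zero i), fun i j hij => ?_, ?_⟩
    · simp only [image_add_left_span_singleton_zmod_two, Set.disjoint_left]
      exact fun x hi hj => hj.elim (lines_disjoint i j hij x hi).1 (lines_disjoint i j hij x hi).2
    · ext x
      simp only [hsupp, image_add_left_span_singleton_zmod_two, inSupport_iff_mem_line x,
        Set.mem_ofPred_eq, Set.mem_iUnion, Set.mem_insert_iff, Set.mem_singleton_iff]
  · rintro ⟨a, b, V, W, hV, hW, -, hunion⟩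
    rw [hsupp] at hunion
    have h0 : (0 : Fin 6 → ZMod 2) ∈ {x | InSupport x} := by decide
    rw [hunion] at h0
    rcases h0 with h0 | h0
    · exact not_image_add_left_subset_inSupport V (by omega) h0 (hunion ▸ Set.subset_union_left)
    · exact not_image_add_left_subset_inSupport W (by omega) h0 (hunion ▸ Set.subset_union_right)
end
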